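/- arXiv:2309.15026 — 8 statements merged into one kernel-verified Lean document; each statement's English description precedes it below -/
import Mathlib

section
/- For every non-constant Boolean function f : {0,1}^n → {0,1}, the instance complexity of f is at most DT(f)/C_min(f); that is, there exists a decision tree T computing f of depth DT(f) such that for every input x ∈ {0,1}^n, the number of queries T makes on x times C_min(f) is at most DT(f) times C(f,x). -/
/-- A deterministic decision tree over variables indexed by `ι`:
either a leaf labeled with an output bit, or an internal node that queries
variable `i` and branches on its value (`t0` if false, `t1` if true). -/
inductive DecTree (ι : Type) where
  | leaf (b : Bool)
  | node (i : ι) (t0 t1 : DecTree ι)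

namespace DecTree

variable {ι : Type}

/-- The output of a decision tree on input `x`. -/
def eval : DecTree ι → (ι → Bool) → Bool
  | leaf b, _ => b
  | node i t0 t1, x => if x i then t1.eval x else t0.eval x

/-- The number of queries (internal nodes visited) made by a decision tree on input `x`. -/
def queries : DecTree ι → (ι → Bool) → ℕ
  | leaf _, _ => 0
  | node i t0 t1, x => 1 + (if x i then t1.queries x else t0.queries x)

/-- The depth of a decision tree: the maximum number of queries over all inputs. -/
def depth : DecTree ι → ℕ
  | leaf _ => 0
  | node _ t0 t1 => 1 + max t0.depth t1.depth

end DecTree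

/-- A decision tree `T` computes `f` if its output agrees with `f` on every input. -/
def Computes {ι : Type} (T : DecTree ι) (f : (ι → Bool) → Bool) : Prop :=
  ∀ x, T.eval x = f x

/-- `S` is a certificate for input `x` w.r.t. `f`: every input agreeing with `x`
on all coordinates in `S` has the same function value as `x`. -/
def IsCert {ι : Type} (f : (ι → Bool) → Bool) (x : ι → Bool) (S : Finset ι) : Prop :=
  ∀ y : ι → Bool, (∀ i ∈ S, y i = x i) → f y = f x

/-- The certificate complexity `C(f,x)`: the minimum size of a certificate for `x`. -/
noncomputable def certC {ι : Type} (f : (ι → Bool) → Bool) (x : ι → Bool) : ℕ :=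
  sInf {k | ∃ S : Finset ι, S.card = k ∧ IsCert f x S}

/-- The minimum certificate complexity `C_min(f) = min_x C(f,x)`. -/
noncomputable def Cmin {ι : Type} (f : (ι → Bool) → Bool) : ℕ :=
  sInf {k | ∃ x : ι → Bool, certC f x = k}

/-- The deterministic query complexity `DT(f)`: the minimum depth of a decision
tree computing `f`. -/
noncomputable def DTC {ι : Type} (f : (ι → Bool) → Bool) : ℕ :=
  sInf {d | ∃ T : DecTree ι, Computes T f ∧ T.depth ≤ d}

/-- The Hamming weight of an input. -/
def wt {n : ℕ} (x : Fin n → Bool) : ℕ :=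
  (Finset.univ.filter fun i => x i = true).card


/-- Build a full decision tree querying all variables in `l`, with accumulated
partial assignment `x`. -/
def buildTree {ι : Type} [DecidableEq ι] (f : (ι → Bool) → Bool) :
    List ι → (ι → Bool) → DecTree ι
  | [], x => .leaf (f x)
  | i :: l, x => .node i (buildTree f l (Function.update x i false))
      (buildTree f l (Function.update x i true))

lemma buildTree_eval {ι : Type} [DecidableEq ι] (f : (ι → Bool) → Bool) :
    ∀ (l : List ι) (x y : ι → Bool), (∀ j, j ∉ l → x j = y j) →
      (buildTree f l x).eval y = f y := by
  intro l
  induction l with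
  | nil =>
    intro x y h
    have : x = y := funext fun j => h j (List.not_mem_nil)
    simp [buildTree, DecTree.eval, this]
  | cons i l ih =>
    intro x y h
    simp only [buildTree, DecTree.eval]
    by_cases hy : y i
    · simp only [hy, if_true]
      apply ih
      intro j hj
      by_cases hji : j = i
      · subst hji; simp [Function.update_self, hy]
      · rw [Function.update_of_ne hji]
        exact h j (by simp [hj, hji])
    · simp only [hy, if_false]
      apply ih
      intro j hj
      by_cases hji : j = i
      · subst hji
        simp only [Function.update_self]
        exact (Bool.not_eq_true (y j)).mp hy |>.symm
      · rw [Function.update_of_ne hji]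
        exact h j (by simp [hj, hji])

lemma exists_tree {n : ℕ} (f : (Fin n → Bool) → Bool) :
    ∃ T : DecTree (Fin n), Computes T f := by
  refine ⟨buildTree f (List.finRange n) (fun _ => false), fun y => ?_⟩
  exact buildTree_eval f _ _ y (fun j hj => absurd (List.mem_finRange j) hj)

lemma queries_le_depth {ι : Type} : ∀ (T : DecTree ι) (x : ι → Bool),
    T.queries x ≤ T.depth := by
  intro T
  induction T with
  | leaf b => intro x; simp [DecTree.queries, DecTree.depth]
  | node i t0 t1 ih0 ih1 =>
    intro x
    simp only [DecTree.queries, DecTree.depth]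
    by_cases hx : x i
    · simp only [hx, if_true]
      exact Nat.add_le_add_left (le_trans (ih1 x) (le_max_right _ _)) 1
    · simp only [hx, if_false]
      exact Nat.add_le_add_left (le_trans (ih0 x) (le_max_left _ _)) 1

/-- For every non-constant Boolean function `f`, the instance complexity of `f`
is at most `DT(f)/C_min(f)`: witnessed by an optimal-depth decision tree. -/
theorem instC_le_DT_div_Cmin (n : ℕ) (f : (Fin n → Bool) → Bool)
    (hnc : ∃ x y : Fin n → Bool, f x ≠ f y) :
    ∃ T : DecTree (Fin n), Computes T f ∧ T.depth = DTC f ∧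
      ∀ x : Fin n → Bool, T.queries x * Cmin f ≤ DTC f * certC f x := by
  obtain ⟨T0, hT0⟩ := exists_tree f
  have hne : {d | ∃ T : DecTree (Fin n), Computes T f ∧ T.depth ≤ d}.Nonempty :=
    ⟨T0.depth, T0, hT0, le_refl _⟩
  obtain ⟨T, hT, hd⟩ : DTC f ∈ {d | ∃ T : DecTree (Fin n), Computes T f ∧ T.depth ≤ d} :=
    Nat.sInf_mem hne
  have hge : DTC f ≤ T.depth := Nat.sInf_le ⟨T, hT, le_refl _⟩
  have hdepth : T.depth = DTC f := le_antisymm hd hge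
  refine ⟨T, hT, hdepth, fun x => ?_⟩
  have h1 : T.queries x ≤ DTC f := hdepth ▸ queries_le_depth T x
  have h2 : Cmin f ≤ certC f x := Nat.sInf_le ⟨x, rfl⟩
  exact Nat.mul_le_mul h1 h2
end

section
/- Let f : {0,1}^n → {0,1} be a symmetric Boolean function with predicate D : {0,...,n} → {0,1}, and let L(f) denote the maximum of b − a over all pairs 0 ≤ a ≤ b ≤ n such that D is constant on the interval {a, a+1, ..., b}. Then the minimum certificate complexity of f satisfies C_min(f) = n − L(f). -/
-- Auxiliary lemmas

lemma aux_card_lt (n a : ℕ) (ha : a ≤ n) :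
    (Finset.univ.filter fun i : Fin n => (i : ℕ) < a).card = a := by
  have himg : (Finset.univ.filter fun i : Fin n => (i : ℕ) < a).image Fin.val
      = Finset.range a := by
    ext m
    simp only [Finset.mem_image, Finset.mem_filter, Finset.mem_univ, true_and,
      Finset.mem_range]
    constructor
    · rintro ⟨i, hi, rfl⟩; exact hi
    · intro hm; exact ⟨⟨m, lt_of_lt_of_le hm ha⟩, hm, rfl⟩
  have := Finset.card_image_of_injective
    (Finset.univ.filter fun i : Fin n => (i : ℕ) < a) Fin.val_injective
  rw [himg, Finset.card_range] at this
  omega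

lemma aux_cert_lower (n : ℕ) (f : (Fin n → Bool) → Bool) (D : ℕ → Bool)
    (hD : ∀ x : Fin n → Bool, f x = D (wt x)) (L : ℕ)
    (hL : IsGreatest {d : ℕ | ∃ a b : ℕ, a ≤ b ∧ b ≤ n ∧
      (∀ i : ℕ, a ≤ i → i ≤ b → D i = D a) ∧ d = b - a} L)
    (x : Fin n → Bool) (S : Finset (Fin n)) (hS : IsCert f x S) :
    n - L ≤ S.card := by
  set k := S.card with hk
  have hkn : k ≤ n := by
    have := Finset.card_le_card (Finset.subset_univ S)
    simpa using this
  set a := (S.filter fun i => x i = true).card with ha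
  have hak : a ≤ k := Finset.card_le_card (Finset.filter_subset _ _)
  -- key: for every m ≤ n - k, D (a + m) = D (wt x)
  have key : ∀ m, m ≤ n - k → D (a + m) = D (wt x) := by
    intro m hm
    have hcompl : (Sᶜ : Finset (Fin n)).card = n - k := by
      rw [Finset.card_compl]; simp [hk]
    obtain ⟨T, hTsub, hTcard⟩ := Finset.exists_subset_card_eq (by omega : m ≤ (Sᶜ : Finset (Fin n)).card)
    set y : Fin n → Bool := fun i => if i ∈ S then x i else decide (i ∈ T) with hy
    have hagree : ∀ i ∈ S, y i = x i := by intro i hi; simp [hy, hi]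
    have hfy : f y = f x := hS y hagree
    have hwty : wt y = a + m := by
      have hset : (Finset.univ.filter fun i => y i = true)
          = (S.filter fun i => x i = true) ∪ T := by
        ext i
        simp only [Finset.mem_filter, Finset.mem_univ, true_and, Finset.mem_union]
        constructor
        · intro hi
          by_cases hiS : i ∈ S
          · left; refine ⟨hiS, ?_⟩; simpa [hy, hiS] using hi
          · right; simpa [hy, hiS] using hi
        · rintro (⟨hiS, hxi⟩ | hiT)
          · simp [hy, hiS, hxi]
          · have hiS : i ∉ S := by
              have := hTsub hiT; simpa [Finset.mem_compl] using this
            simp [hy, hiS, hiT]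
      have hdisj : Disjoint (S.filter fun i => x i = true) T := by
        apply Finset.disjoint_left.mpr
        intro i hi hiT
        have h1 := (Finset.mem_filter.mp hi).1
        have h2 := hTsub hiT
        simp [Finset.mem_compl] at h2
        exact h2 h1
      rw [wt, hset, Finset.card_union_of_disjoint hdisj, hTcard, ha]
    rw [hD y, hD x, hwty] at hfy
    exact hfy
  have hDa : D a = D (wt x) := by simpa using key 0 (Nat.zero_le _)
  have hmem : (n - k) ∈ {d : ℕ | ∃ a b : ℕ, a ≤ b ∧ b ≤ n ∧
      (∀ i : ℕ, a ≤ i → i ≤ b → D i = D a) ∧ d = b - a} := by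
    refine ⟨a, a + (n - k), by omega, by omega, ?_, by omega⟩
    intro i hai hib
    have : D (a + (i - a)) = D (wt x) := key (i - a) (by omega)
    rw [show a + (i - a) = i by omega] at this
    rw [this, hDa]
  have := hL.2 hmem
  omega

/-- For a symmetric Boolean function `f` with predicate `D`, where `L` is the
maximum length `b - a` of an interval `{a,…,b} ⊆ {0,…,n}` on which `D` is
constant, we have `C_min(f) = n - L`. -/
theorem symm_Cmin (n : ℕ) (f : (Fin n → Bool) → Bool) (D : ℕ → Bool)
    (hD : ∀ x : Fin n → Bool, f x = D (wt x)) (L : ℕ)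
    (hL : IsGreatest {d : ℕ | ∃ a b : ℕ, a ≤ b ∧ b ≤ n ∧
      (∀ i : ℕ, a ≤ i → i ≤ b → D i = D a) ∧ d = b - a} L) :
    Cmin f = n - L := by
  obtain ⟨a, b, hab, hbn, hconst, hLeq⟩ := hL.1
  apply le_antisymm
  · -- Cmin f ≤ n - L : exhibit x of weight a with certificate of size n - L
    set x : Fin n → Bool := fun i => decide ((i : ℕ) < a) with hx
    have hwtx : wt x = a := by
      rw [wt]
      have : (Finset.univ.filter fun i : Fin n => x i = true)
          = (Finset.univ.filter fun i : Fin n => (i : ℕ) < a) := by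
        ext i; simp [hx]
      rw [this, aux_card_lt n a (le_trans hab hbn)]
    set S : Finset (Fin n) := Finset.univ.filter fun i => (i : ℕ) < a ∨ b ≤ (i : ℕ) with hSdef
    have hScard : S.card = a + (n - b) := by
      have hsplit : S = (Finset.univ.filter fun i : Fin n => (i : ℕ) < a)
          ∪ (Finset.univ.filter fun i : Fin n => b ≤ (i : ℕ)) := by
        ext i; simp [hSdef]
      have hdisj : Disjoint (Finset.univ.filter fun i : Fin n => (i : ℕ) < a)
          (Finset.univ.filter fun i : Fin n => b ≤ (i : ℕ)) := by
        apply Finset.disjoint_left.mpr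
        intro i hi1 hi2
        simp only [Finset.mem_filter, Finset.mem_univ, true_and] at hi1 hi2
        omega
      have hbcard : (Finset.univ.filter fun i : Fin n => b ≤ (i : ℕ)).card = n - b := by
        have h1 : (Finset.univ.filter fun i : Fin n => (i : ℕ) < b).card = b :=
          aux_card_lt n b hbn
        have h2 := Finset.card_filter_add_card_filter_not
          (s := (Finset.univ : Finset (Fin n))) (p := fun i : Fin n => (i : ℕ) < b)
        simp only [Finset.card_univ, Fintype.card_fin] at h2
        have h3 : (Finset.univ.filter fun i : Fin n => ¬ (i : ℕ) < b)
            = Finset.univ.filter fun i : Fin n => b ≤ (i : ℕ) := by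
          ext i; simp [Nat.not_lt]
        rw [h1, h3] at h2
        omega
      rw [hsplit, Finset.card_union_of_disjoint hdisj,
        aux_card_lt n a (le_trans hab hbn), hbcard]
    have hcert : IsCert f x S := by
      intro y hy
      rw [hD y, hD x, hwtx]
      have hlow : a ≤ wt y := by
        rw [← aux_card_lt n a (le_trans hab hbn)]
        apply Finset.card_le_card
        intro i hi
        simp only [Finset.mem_filter, Finset.mem_univ, true_and] at hi ⊢
        have hiS : i ∈ S := by simp [hSdef]; omega
        rw [hy i hiS]
        simp [hx, hi]
      have hhigh : wt y ≤ b := by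
        rw [← aux_card_lt n b hbn]
        apply Finset.card_le_card
        intro i hi
        simp only [Finset.mem_filter, Finset.mem_univ, true_and, wt] at hi ⊢
        by_contra hib
        push_neg at hib
        have hiS : i ∈ S := by simp [hSdef]; omega
        have := hy i hiS
        rw [hi] at this
        simp [hx] at this
        omega
      exact hconst (wt y) hlow hhigh
    have hcertC : certC f x ≤ n - L := by
      apply Nat.sInf_le
      exact ⟨S, by rw [hScard]; omega, hcert⟩
    calc Cmin f ≤ certC f x := Nat.sInf_le ⟨x, rfl⟩
      _ ≤ n - L := hcertC
  · -- n - L ≤ Cmin f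
    have hne : {k | ∃ x : Fin n → Bool, certC f x = k}.Nonempty :=
      ⟨certC f (fun _ => false), fun _ => false, rfl⟩
    obtain ⟨x, hx⟩ := Nat.sInf_mem hne
    rw [Cmin, ← hx]
    have hne2 : {k | ∃ S : Finset (Fin n), S.card = k ∧ IsCert f x S}.Nonempty := by
      refine ⟨Finset.univ.card, Finset.univ, rfl, ?_⟩
      intro y hy
      have : y = x := funext fun i => hy i (Finset.mem_univ i)
      rw [this]
    obtain ⟨S, hScard, hScert⟩ := Nat.sInf_mem hne2
    rw [certC, ← hScard]
    exact aux_cert_lower n f D hD L hL x S hScert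
end

section
/- Let f : {0,1}^n → {0,1} be a non-constant symmetric Boolean function with predicate D : {0,...,n} → {0,1}, and let L(f) denote the maximum of b − a over all pairs 0 ≤ a ≤ b ≤ n such that D is constant on {a, ..., b}. Then the instance complexity of f equals n/(n − L(f)): (i) there exists a decision tree T computing f such that for all x ∈ {0,1}^n, T(x)·(n − L(f)) ≤ n·C(f,x), and (ii) for every decision tree T computing f there exists x ∈ {0,1}^n with T(x)·(n − L(f)) ≥ n·C(f,x). -/
open Finset

section Aux
variable {n : ℕ}

lemma wt_le (x : Fin n → Bool) : wt x ≤ n := by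
  unfold wt
  calc (univ.filter fun i => x i = true).card ≤ (univ : Finset (Fin n)).card :=
        card_filter_le _ _
    _ = n := by simp

lemma zeros_card (x : Fin n → Bool) :
    (Finset.univ.filter fun i => x i = false).card = n - wt x := by
  have h : (Finset.univ.filter fun i => x i = false)
      = (Finset.univ.filter fun i => x i = true)ᶜ := by
    ext i; simp
  rw [h, Finset.card_compl]
  simp [wt]

lemma wt_update_true (x : Fin n → Bool) (i : Fin n) (hx : x i = false) :
    wt (Function.update x i true) = wt x + 1 := by
  unfold wt
  have h : (univ.filter fun j => Function.update x i true j = true)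
      = insert i (univ.filter fun j => x j = true) := by
    ext j
    by_cases hj : j = i
    · subst hj; simp [Function.update_self]
    · simp [Function.update_of_ne hj, hj]
  rw [h, card_insert_of_notMem (by simp [hx])]

lemma exists_completion (x : Fin n → Bool) (F : Finset (Fin n)) (w : ℕ)
    (h1 : ((univ \ F).filter (fun i => x i = true)).card ≤ w)
    (h2 : w ≤ ((univ \ F).filter (fun i => x i = true)).card + F.card) :
    ∃ y : Fin n → Bool, (∀ i ∉ F, y i = x i) ∧ wt y = w := by
  set o := ((univ \ F).filter (fun i => x i = true)).card with ho
  obtain ⟨G, hGF, hGcard⟩ := Finset.exists_subset_card_eq (s := F) (n := w - o) (by omega)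
  refine ⟨fun i => if i ∈ F then decide (i ∈ G) else x i, ?_, ?_⟩
  · intro i hi; simp [hi]
  · unfold wt
    have h : (univ.filter fun i => (if i ∈ F then decide (i ∈ G) else x i) = true)
        = ((univ \ F).filter fun i => x i = true) ∪ G := by
      ext i
      by_cases hi : i ∈ F <;> by_cases hG : i ∈ G
      · simp [hi, hG]
      · simp [hi, hG]
      · exact absurd (hGF hG) hi
      · simp [hi, hG]
    rw [h, card_union_of_disjoint, hGcard, ← ho]
    · omega
    · exact Finset.disjoint_left.2 fun i hi hG => by
        have := (mem_sdiff.1 (mem_filter.1 hi).1).2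
        exact this (hGF hG)

lemma ones_off_eq_wt (x : Fin n → Bool) (F : Finset (Fin n))
    (hz : ∀ i ∈ F, x i = false) :
    ((univ \ F).filter (fun i => x i = true)).card = wt x := by
  unfold wt
  congr 1
  ext i
  simp only [mem_filter, mem_sdiff, mem_univ, true_and]
  constructor
  · rintro ⟨_, h⟩; exact h
  · intro h
    refine ⟨?_, h⟩
    intro hiF
    rw [hz i hiF] at h
    exact Bool.false_ne_true h
end Aux

section Cert
variable {n : ℕ}

lemma certC_le (f : (Fin n → Bool) → Bool) (D : ℕ → Bool)
    (hD : ∀ x, f x = D (wt x)) (a b : ℕ) (hbn : b ≤ n)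
    (hconst : ∀ i, a ≤ i → i ≤ b → D i = D a)
    (x : Fin n → Bool) (hwa : a ≤ wt x) (hwb : wt x ≤ b) :
    certC f x ≤ a + (n - b) := by
  obtain ⟨P, hP, hPc⟩ := Finset.exists_subset_card_eq
    (s := univ.filter fun i => x i = true) (n := a) hwa
  obtain ⟨Z, hZ, hZc⟩ := Finset.exists_subset_card_eq
    (s := univ.filter fun i => x i = false) (n := n - b) (by rw [zeros_card]; omega)
  apply Nat.sInf_le
  refine ⟨P ∪ Z, ?_, ?_⟩
  · rw [card_union_of_disjoint, hPc, hZc]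
    refine Finset.disjoint_left.2 fun i hi hZi => ?_
    have h1 := (mem_filter.1 (hP hi)).2
    have h2 := (mem_filter.1 (hZ hZi)).2
    rw [h1] at h2; exact absurd h2 (by simp)
  · intro y hy
    have h1 : a ≤ wt y := by
      have hs : P ⊆ univ.filter fun i => y i = true := by
        intro i hi
        simp only [mem_filter, mem_univ, true_and]
        rw [hy i (mem_union_left _ hi)]
        exact (mem_filter.1 (hP hi)).2
      calc a = P.card := hPc.symm
        _ ≤ _ := card_le_card hs
    have h2 : wt y ≤ b := by
      have hs : Z ⊆ univ.filter fun i => y i = false := by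
        intro i hi
        simp only [mem_filter, mem_univ, true_and]
        rw [hy i (mem_union_right _ hi)]
        exact (mem_filter.1 (hZ hi)).2
      have := card_le_card hs
      rw [zeros_card, hZc] at this
      have := wt_le y
      omega
    rw [hD, hD, hconst _ h1 h2, hconst _ hwa hwb]

lemma certC_ge (f : (Fin n → Bool) → Bool) (D : ℕ → Bool)
    (hD : ∀ x, f x = D (wt x)) (L : ℕ)
    (hub : ∀ d ∈ {d : ℕ | ∃ a b : ℕ, a ≤ b ∧ b ≤ n ∧
      (∀ i : ℕ, a ≤ i → i ≤ b → D i = D a) ∧ d = b - a}, d ≤ L)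
    (x : Fin n → Bool) : n - L ≤ certC f x := by
  have hne : {k | ∃ S : Finset (Fin n), S.card = k ∧ IsCert f x S}.Nonempty := by
    refine ⟨(univ : Finset (Fin n)).card, univ, rfl, fun y hy => ?_⟩
    have : y = x := funext fun i => hy i (mem_univ i)
    rw [this]
  obtain ⟨S, hScard, hScert⟩ := Nat.sInf_mem hne
  set p := ((univ \ Sᶜ).filter fun i => x i = true).card with hpdef
  have hUS : (univ : Finset (Fin n)) \ Sᶜ = S := by
    ext i; simp
  have hp : p ≤ S.card := by
    rw [hpdef, hUS]; exact card_filter_le _ _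
  have hSn : S.card ≤ n := by
    calc S.card ≤ (univ : Finset (Fin n)).card := card_le_card (subset_univ _)
      _ = n := by simp
  have hcardc : (Sᶜ : Finset (Fin n)).card = n - S.card := by
    rw [card_compl]; simp
  have base : ∀ i, p ≤ i → i ≤ p + (n - S.card) → D i = D (wt x) := by
    intro i h1 h2
    obtain ⟨y, hy1, hy2⟩ := exists_completion x Sᶜ i h1 (by rw [hcardc, ← hpdef]; omega)
    have := hScert y (fun j hj => hy1 j (by simp [hj]))
    rw [hD, hD, hy2] at this
    exact this
  have key : ∀ i, p ≤ i → i ≤ p + (n - S.card) → D i = D p := by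
    intro i h1 h2
    rw [base i h1 h2, base p le_rfl (Nat.le_add_right _ _)]
  have hmem : n - S.card ≤ L := by
    refine hub _ ⟨p, p + (n - S.card), Nat.le_add_right _ _, by omega, key, by omega⟩
  have hc : S.card = certC f x := hScard
  omega
end Cert

section Full
variable {n : ℕ}

def fullTree (f : (Fin n → Bool) → Bool) : List (Fin n) → (Fin n → Bool) → DecTree (Fin n)
  | [], x => .leaf (f x)
  | i :: l, x => .node i (fullTree f l (Function.update x i false))
      (fullTree f l (Function.update x i true))

lemma fullTree_eval (f : (Fin n → Bool) → Bool) (l : List (Fin n))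
    (x y : Fin n → Bool) :
    (fullTree f l x).eval y = f (fun i => if i ∈ l then y i else x i) := by
  induction l generalizing x with
  | nil =>
    simp only [fullTree, DecTree.eval]
    congr 1
  | cons i l ih =>
    simp only [fullTree, DecTree.eval]
    have key : ∀ b : Bool, y i = b →
        (fullTree f l (Function.update x i b)).eval y
          = f (fun i' => if i' ∈ i :: l then y i' else x i') := by
      intro b hb
      rw [ih]
      congr 1
      funext i'
      by_cases hl : i' ∈ l
      · simp [hl]
      · by_cases hii : i' = i
        · subst hii; simp [hl, Function.update_self, hb]
        · simp [hl, hii, Function.update_of_ne hii]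
    cases hyi : y i with
    | false => simpa using key false hyi
    | true => simpa using key true hyi

lemma fullTree_queries (f : (Fin n → Bool) → Bool) (l : List (Fin n))
    (x y : Fin n → Bool) :
    (fullTree f l x).queries y = l.length := by
  induction l generalizing x with
  | nil => simp [fullTree, DecTree.queries]
  | cons i l ih =>
    simp only [fullTree, DecTree.queries, List.length_cons]
    cases hyi : y i <;> simp [hyi, ih] <;> omega
end Full

lemma adversary {n : ℕ} (D : ℕ → Bool) (j : ℕ) (hDj : D j ≠ D (j+1)) (w : ℕ)
    (hw : w = j ∨ w = j + 1)
    (T : DecTree (Fin n)) :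
    ∀ (F : Finset (Fin n)) (x0 : Fin n → Bool),
      (∀ i ∈ F, x0 i = false) → wt x0 ≤ j → j + 1 ≤ wt x0 + F.card →
      (∀ y : Fin n → Bool, (∀ i ∉ F, y i = x0 i) → T.eval y = D (wt y)) →
      ∃ y : Fin n → Bool, (∀ i ∉ F, y i = x0 i) ∧ wt y = w ∧ F.card ≤ T.queries y := by
  induction T with
  | leaf b =>
    intro F x0 hzero ho h1 H
    exfalso
    have hkey := ones_off_eq_wt x0 F hzero
    obtain ⟨y1, hy1a, hy1w⟩ := exists_completion x0 F j (by omega) (by omega)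
    obtain ⟨y2, hy2a, hy2w⟩ := exists_completion x0 F (j+1) (by omega) (by omega)
    have e1 := H y1 hy1a
    have e2 := H y2 hy2a
    simp only [DecTree.eval] at e1 e2
    rw [hy1w] at e1; rw [hy2w] at e2
    exact hDj (e1 ▸ e2 ▸ rfl)
  | node i t0 t1 ih0 ih1 =>
    intro F x0 hzero ho h1 H
    by_cases hiF : i ∈ F
    · have hxi : x0 i = false := hzero i hiF
      have hce : (F.erase i).card = F.card - 1 := card_erase_of_mem hiF
      by_cases hcard : F.card = 1
      · -- the last free variable: answer to reach target w
        have hoj : wt x0 = j := by omega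
        rcases hw with hw | hw
        · refine ⟨x0, fun _ _ => rfl, by omega, ?_⟩
          simp only [DecTree.queries, hxi, Bool.false_eq_true, if_false]
          omega
        · refine ⟨Function.update x0 i true, ?_, ?_, ?_⟩
          · intro i' hi'
            exact Function.update_of_ne (by rintro rfl; exact hi' hiF) _ _
          · rw [wt_update_true x0 i hxi]; omega
          · simp only [DecTree.queries, Function.update_self, if_true]
            omega
      · by_cases hlt : wt x0 < j
        · -- answer true, recurse into t1
          set x1 := Function.update x0 i true with hx1
          have hw1 : wt x1 = wt x0 + 1 := wt_update_true _ _ hxi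
          have hx1i : x1 i = true := Function.update_self _ _ _
          have hx1ne : ∀ i', i' ≠ i → x1 i' = x0 i' :=
            fun i' h => Function.update_of_ne h _ _
          obtain ⟨y, hy1, hy2, hy3⟩ := ih1 (F.erase i) x1
            (fun i' hi' => by
              rw [hx1ne i' (ne_of_mem_erase hi')]
              exact hzero i' (mem_of_mem_erase hi'))
            (by omega) (by rw [hce]; omega)
            (fun y hy => by
              have hyi : y i = true := by
                rw [hy i (notMem_erase i F)]; exact hx1i
              have hagree : ∀ i' ∉ F, y i' = x0 i' := by
                intro i' hi'
                rw [hy i' (fun h => hi' (mem_of_mem_erase h)),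
                  hx1ne i' (by rintro rfl; exact hi' hiF)]
              have := H y hagree
              simp only [DecTree.eval, hyi, if_true] at this
              exact this)
          refine ⟨y, ?_, hy2, ?_⟩
          · intro i' hi'
            rw [hy1 i' (fun h => hi' (mem_of_mem_erase h)),
              hx1ne i' (by rintro rfl; exact hi' hiF)]
          · have hyi : y i = true := by
              rw [hy1 i (notMem_erase i F)]; exact hx1i
            simp only [DecTree.queries, hyi, if_true]
            omega
        · -- wt x0 = j : answer false, recurse into t0
          obtain ⟨y, hy1, hy2, hy3⟩ := ih0 (F.erase i) x0
            (fun i' hi' => hzero i' (mem_of_mem_erase hi'))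
            ho (by rw [hce]; omega)
            (fun y hy => by
              have hyi : y i = false := by
                rw [hy i (notMem_erase i F)]; exact hxi
              have hagree : ∀ i' ∉ F, y i' = x0 i' :=
                fun i' hi' => hy i' (fun h => hi' (mem_of_mem_erase h))
              have := H y hagree
              simp only [DecTree.eval, hyi, if_false] at this
              exact this)
          refine ⟨y, fun i' hi' => hy1 i' (fun h => hi' (mem_of_mem_erase h)), hy2, ?_⟩
          have hyi : y i = false := by
            rw [hy1 i (notMem_erase i F)]; exact hxi
          simp only [DecTree.queries, hyi, Bool.false_eq_true, if_false]
          omega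
    · -- queried variable already fixed
      cases hxi : x0 i with
      | false =>
        obtain ⟨y, hy1, hy2, hy3⟩ := ih0 F x0 hzero ho h1
          (fun y hy => by
            have hyi : y i = false := by rw [hy i hiF]; exact hxi
            have := H y hy
            simp only [DecTree.eval, hyi, if_false] at this
            exact this)
        refine ⟨y, hy1, hy2, ?_⟩
        have hyi : y i = false := by rw [hy1 i hiF]; exact hxi
        simp only [DecTree.queries, hyi, Bool.false_eq_true, if_false]
        omega
      | true =>
        obtain ⟨y, hy1, hy2, hy3⟩ := ih1 F x0 hzero ho h1
          (fun y hy => by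
            have hyi : y i = true := by rw [hy i hiF]; exact hxi
            have := H y hy
            simp only [DecTree.eval, hyi, if_true] at this
            exact this)
        refine ⟨y, hy1, hy2, ?_⟩
        have hyi : y i = true := by rw [hy1 i hiF]; exact hxi
        simp only [DecTree.queries, hyi, if_true]
        omega

/-- For a non-constant symmetric Boolean function `f` with predicate `D`, where
`L` is the maximum length of an interval of Hamming weights on which `D` is
constant, the instance complexity of `f` equals `n / (n - L)`. -/
theorem symm_instC (n : ℕ) (f : (Fin n → Bool) → Bool) (D : ℕ → Bool)
    (hD : ∀ x : Fin n → Bool, f x = D (wt x))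
    (hnc : ∃ x y : Fin n → Bool, f x ≠ f y) (L : ℕ)
    (hL : IsGreatest {d : ℕ | ∃ a b : ℕ, a ≤ b ∧ b ≤ n ∧
      (∀ i : ℕ, a ≤ i → i ≤ b → D i = D a) ∧ d = b - a} L) :
    (∃ T : DecTree (Fin n), Computes T f ∧
        ∀ x : Fin n → Bool, T.queries x * (n - L) ≤ n * certC f x) ∧
    (∀ T : DecTree (Fin n), Computes T f →
        ∃ x : Fin n → Bool, T.queries x * (n - L) ≥ n * certC f x) := by
  obtain ⟨⟨a, b, hab, hbn, hconst, hLab⟩, hub⟩ := hL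
  -- find a "jump" of D at an endpoint of the maximum constant interval
  have hjump : ∃ j w, D j ≠ D (j+1) ∧ j + 1 ≤ n ∧ a ≤ w ∧ w ≤ b ∧
      (w = j ∨ w = j + 1) := by
    by_cases ha : 0 < a
    · refine ⟨a - 1, a, ?_, by omega, le_rfl, hab, Or.inr (by omega)⟩
      intro h
      have hc : ∀ i : ℕ, a - 1 ≤ i → i ≤ b → D i = D (a - 1) := by
        intro i h1 h2
        by_cases hia : i ≤ a - 1
        · have : i = a - 1 := by omega
          rw [this]
        · have ha1 : a - 1 + 1 = a := by omega
          rw [ha1] at h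
          rw [hconst i (by omega) h2, h]
      have hmem : b - (a - 1) ≤ L := hub ⟨a - 1, b, by omega, hbn, hc, rfl⟩
      omega
    · have ha0 : a = 0 := by omega
      by_cases hbn' : b < n
      · refine ⟨b, b, ?_, by omega, by omega, le_rfl, Or.inl rfl⟩
        intro h
        have hc : ∀ i : ℕ, a ≤ i → i ≤ b + 1 → D i = D a := by
          intro i h1 h2
          by_cases hib : i ≤ b
          · exact hconst i h1 hib
          · have : i = b + 1 := by omega
            rw [this, ← h]
            exact hconst b hab le_rfl
        have hmem : (b + 1) - a ≤ L := hub ⟨a, b + 1, by omega, by omega, hc, rfl⟩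
        omega
      · exfalso
        obtain ⟨x, y, hxy⟩ := hnc
        apply hxy
        rw [hD, hD, hconst (wt x) (by omega) (by have := wt_le x; omega),
          hconst (wt y) (by omega) (by have := wt_le y; omega)]
  obtain ⟨j, w, hDj, hjn, haw, hwb, hw⟩ := hjump
  constructor
  · -- upper bound: the full tree
    refine ⟨fullTree f (List.finRange n) (fun _ => false), ?_, ?_⟩
    · intro x
      rw [fullTree_eval]
      congr 1
      funext i
      simp [List.mem_finRange]
    · intro x
      rw [fullTree_queries, List.length_finRange]
      have h1 : n - L ≤ certC f x := certC_ge f D hD L hub x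
      exact Nat.mul_le_mul_left n h1
  · intro T hT
    have hwt0 : wt (fun _ : Fin n => false) = 0 := by simp [wt]
    have hcardu : (univ : Finset (Fin n)).card = n := by simp
    obtain ⟨y, _, hyw, hyq⟩ := adversary D j hDj w hw T univ (fun _ => false)
      (fun _ _ => rfl) (by omega) (by omega)
      (fun y _ => by rw [hT y, hD])
    refine ⟨y, ?_⟩
    have hc : certC f y ≤ a + (n - b) :=
      certC_le f D hD a b hbn hconst y (hyw ▸ haw) (hyw ▸ hwb)
    calc n * certC f y ≤ n * (n - L) := Nat.mul_le_mul_left n (by omega)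
      _ ≤ T.queries y * (n - L) := Nat.mul_le_mul_right _ (by omega)
end

section
/- A non-constant symmetric Boolean function f : {0,1}^n → {0,1} has instance complexity 1 (i.e., there exists a decision tree T computing f such that T(x) = C(f,x) for all inputs x) if and only if f is the parity function XOR_n or its negation. -/
-- ======================= helper development =======================
namespace ICHelp

open Finset

set_option linter.unusedSectionVars false

namespace Tree

open DecTree

variable {ι : Type} [DecidableEq ι]

def pathset : DecTree ι → (ι → Bool) → Finset ι
  | .leaf _, _ => ∅
  | .node i t0 t1, x => insert i (if x i then pathset t1 x else pathset t0 x)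

lemma card_pathset_le (t : DecTree ι) (x : ι → Bool) :
    (pathset t x).card ≤ t.queries x := by
  induction t with
  | leaf b => simp [pathset, DecTree.queries]
  | node i t0 t1 h0 h1 =>
    simp only [pathset, DecTree.queries]
    cases hx : x i <;> simp only [hx, if_false, if_true, Bool.false_eq_true, ite_false, ite_true] <;>
      exact le_trans (Finset.card_insert_le _ _) (by omega)

lemma eval_eq_of_agree (t : DecTree ι) (x y : ι → Bool)
    (h : ∀ j ∈ pathset t x, y j = x j) : t.eval y = t.eval x := by
  induction t with
  | leaf b => rfl
  | node i t0 t1 h0 h1 =>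
    have hi : y i = x i := h i (by simp [pathset])
    simp only [DecTree.eval, hi]
    cases hx : x i
    · simp only [hx, Bool.false_eq_true, ite_false]
      exact h0 (fun j hj => h j (by simp [pathset, hx, hj]))
    · simp only [hx, ite_true]
      exact h1 (fun j hj => h j (by simp [pathset, hx, hj]))

def restrict (i : ι) (b : Bool) : DecTree ι → DecTree ι
  | .leaf c => .leaf c
  | .node j t0 t1 =>
      if j = i then (if b then restrict i b t1 else restrict i b t0)
      else .node j (restrict i b t0) (restrict i b t1)

def Avoids (i : ι) : DecTree ι → Prop
  | .leaf _ => True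
  | .node j t0 t1 => j ≠ i ∧ Avoids i t0 ∧ Avoids i t1

lemma avoids_restrict (i : ι) (b : Bool) (t : DecTree ι) : Avoids i (restrict i b t) := by
  induction t with
  | leaf c => trivial
  | node j t0 t1 h0 h1 =>
    by_cases hj : j = i
    · simp only [restrict, hj, ite_true]
      cases b <;> simpa
    · simp only [restrict, hj, ite_false]
      exact ⟨hj, h0, h1⟩

lemma eval_restrict (i : ι) (b : Bool) (t : DecTree ι) (x : ι → Bool) (hx : x i = b) :
    (restrict i b t).eval x = t.eval x := by
  induction t with
  | leaf c => rfl
  | node j t0 t1 h0 h1 =>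
    by_cases hj : j = i
    · subst hj
      simp only [restrict, ite_true, DecTree.eval, hx]
      cases b <;> simpa
    · simp only [restrict, hj, ite_false, DecTree.eval]
      cases hxj : x j <;> simp [h0, h1]

lemma queries_restrict_le (i : ι) (b : Bool) (t : DecTree ι) (x : ι → Bool) (hx : x i = b) :
    (restrict i b t).queries x ≤ t.queries x := by
  induction t with
  | leaf c => simp [restrict]
  | node j t0 t1 h0 h1 =>
    by_cases hj : j = i
    · subst hj
      simp only [restrict, ite_true, DecTree.queries, hx]
      cases b <;> simp only [Bool.false_eq_true, ite_false, ite_true] <;> omega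
    · simp only [restrict, hj, ite_false, DecTree.queries]
      cases hxj : x j <;> simp only [hxj, Bool.false_eq_true, ite_false, ite_true] <;> omega

lemma eval_eq_of_agree_off {i : ι} (t : DecTree ι) (ha : Avoids i t) (x y : ι → Bool)
    (h : ∀ j, j ≠ i → y j = x j) : t.eval y = t.eval x := by
  induction t with
  | leaf b => rfl
  | node j t0 t1 h0 h1 =>
    obtain ⟨hji, ha0, ha1⟩ := ha
    simp only [DecTree.eval, h j hji]
    cases x j <;> simp [h0 ha0, h1 ha1]

lemma queries_eq_of_agree_off {i : ι} (t : DecTree ι) (ha : Avoids i t) (x y : ι → Bool)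
    (h : ∀ j, j ≠ i → y j = x j) : t.queries y = t.queries x := by
  induction t with
  | leaf b => rfl
  | node j t0 t1 h0 h1 =>
    obtain ⟨hji, ha0, ha1⟩ := ha
    simp only [DecTree.queries, h j hji]
    cases x j <;> simp [h0 ha0, h1 ha1]

def map {κ : Type} (h : ι → κ) : DecTree ι → DecTree κ
  | .leaf b => .leaf b
  | .node i t0 t1 => .node (h i) (map h t0) (map h t1)

lemma eval_map {κ : Type} (h : ι → κ) (t : DecTree ι) (x : κ → Bool) :
    (map h t).eval x = t.eval (x ∘ h) := by
  induction t with
  | leaf b => rfl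
  | node i t0 t1 h0 h1 =>
    simp only [map, DecTree.eval, Function.comp_apply, h0, h1]

lemma queries_map {κ : Type} (h : ι → κ) (t : DecTree ι) (x : κ → Bool) :
    (map h t).queries x = t.queries (x ∘ h) := by
  induction t with
  | leaf b => rfl
  | node i t0 t1 h0 h1 =>
    simp only [map, DecTree.queries, Function.comp_apply, h0, h1]

end Tree

section Wt

open Finset

variable {m : ℕ}

lemma wt_le (x : Fin m → Bool) : wt x ≤ m := by
  unfold wt
  exact le_trans (card_filter_le _ _) (by simp)

lemma wt_update_true (x : Fin m → Bool) (i : Fin m) (h : x i = false) :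
    wt (Function.update x i true) = wt x + 1 := by
  unfold wt
  have he : (univ.filter fun j => Function.update x i true j = true)
      = insert i (univ.filter fun j => x j = true) := by
    ext j
    by_cases hj : j = i <;> simp [Function.update_apply, hj, h]
  rw [he, card_insert_of_notMem (by simp [h])]

lemma wt_update_false (x : Fin m → Bool) (i : Fin m) (h : x i = true) :
    wt (Function.update x i false) + 1 = wt x := by
  unfold wt
  have he : (univ.filter fun j => Function.update x i false j = true)
      = (univ.filter fun j => x j = true).erase i := by
    ext j
    by_cases hj : j = i <;> simp [Function.update_apply, hj, h]
  have hi : i ∈ univ.filter fun j => x j = true := by simp [h]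
  rw [he, card_erase_of_mem hi]
  have : 1 ≤ (univ.filter fun j => x j = true).card := card_pos.mpr ⟨i, hi⟩
  omega

lemma exists_wt_eq (k : ℕ) (hk : k ≤ m) : ∃ x : Fin m → Bool, wt x = k := by
  obtain ⟨A, -, hA⟩ := exists_subset_card_eq (s := (univ : Finset (Fin m))) (n := k) (by simpa using hk)
  refine ⟨fun j => decide (j ∈ A), ?_⟩
  unfold wt
  rw [show (univ.filter fun j => decide (j ∈ A) = true) = A by ext j; simp]
  exact hA

lemma wt_zero_iff (x : Fin m → Bool) : wt x = 0 ↔ x = fun _ => false := by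
  constructor
  · intro h
    funext j
    cases hj : x j
    · rfl
    · exfalso
      have : j ∈ univ.filter fun i => x i = true := by simp [hj]
      have := card_pos.mpr ⟨j, this⟩
      unfold wt at h; omega
  · intro h; subst h; unfold wt; simp

lemma wt_lt_exists_false {x : Fin m → Bool} (h : wt x < m) : ∃ j, x j = false := by
  by_contra hall
  push_neg at hall
  have : ∀ j, x j = true := by
    intro j
    cases hj : x j
    · exact absurd hj (hall j)
    · rfl
  have : (univ.filter fun i => x i = true) = univ := by
    ext j; simp [this j]
  unfold wt at h
  rw [this] at h
  simp at h

lemma wt_insertNth_false {m : ℕ} (i : Fin (m+1)) (z : Fin m → Bool) :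
    wt (i.insertNth false z) = wt z := by
  unfold wt
  have hsum := Fin.sum_univ_succAbove
    (fun j => if (i.insertNth false z : Fin (m+1) → Bool) j = true then (1 : ℕ) else 0) i
  rw [Finset.card_filter, Finset.card_filter, hsum]
  simp

end Wt

section Cert

open Finset

variable {m : ℕ}

def WDet (f : (Fin m → Bool) → Bool) : Prop := ∀ x y, wt x = wt y → f x = f y

def Ok (f : (Fin m → Bool) → Bool) (x : Fin m → Bool) (p q : ℕ) : Prop :=
  ∀ y : Fin m → Bool, p ≤ wt y → wt y ≤ m - q → f y = f x

lemma isCert_univ (f : (Fin m → Bool) → Bool) (x : Fin m → Bool) :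
    IsCert f x (univ : Finset (Fin m)) := by
  intro y hy
  have : y = x := funext fun j => hy j (mem_univ j)
  rw [this]

lemma certC_le_of_isCert {f : (Fin m → Bool) → Bool} {x : Fin m → Bool} {S : Finset (Fin m)}
    (h : IsCert f x S) : certC f x ≤ S.card :=
  Nat.sInf_le ⟨S, rfl, h⟩

lemma certC_le (f : (Fin m → Bool) → Bool) (x : Fin m → Bool) : certC f x ≤ m := by
  have := certC_le_of_isCert (isCert_univ f x)
  simpa using this

lemma exists_min_cert (f : (Fin m → Bool) → Bool) (x : Fin m → Bool) :
    ∃ S : Finset (Fin m), S.card = certC f x ∧ IsCert f x S := by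
  have hne : {k | ∃ S : Finset (Fin m), S.card = k ∧ IsCert f x S}.Nonempty :=
    ⟨_, ⟨univ, rfl, isCert_univ f x⟩⟩
  exact Nat.sInf_mem hne

lemma ok_of_isCert {f : (Fin m → Bool) → Bool} (hw : WDet f) {x : Fin m → Bool}
    {S : Finset (Fin m)} (h : IsCert f x S) :
    Ok f x (S.filter fun j => x j = true).card (S.filter fun j => ¬ x j = true).card := by
  intro y hp hq
  set p := (S.filter fun j => x j = true).card with hpdef
  set q := (S.filter fun j => ¬ x j = true).card with hqdef
  have hpq : p + q = S.card :=
    card_filter_add_card_filter_not (p := fun j => x j = true) (s := S)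
  have hSle : S.card ≤ m := by
    have := card_le_card (subset_univ S); simpa using this
  have hfree : wt y - p ≤ (univ \ S).card := by
    rw [card_sdiff_of_subset (subset_univ S)]
    have : (univ : Finset (Fin m)).card = m := by simp
    omega
  obtain ⟨F, hFsub, hFcard⟩ := exists_subset_card_eq hfree
  set y' : Fin m → Bool := fun j => if j ∈ S then x j else decide (j ∈ F) with hy'def
  have hagree : ∀ j ∈ S, y' j = x j := by intro j hj; simp [hy'def, hj]
  have hFS : ∀ j ∈ F, j ∉ S := fun j hj => (mem_sdiff.mp (hFsub hj)).2
  have hwt : wt y' = wt y := by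
    have he : (univ.filter fun j => y' j = true) = (S.filter fun j => x j = true) ∪ F := by
      ext j
      by_cases hj : j ∈ S
      · have hjF : j ∉ F := fun hf => hFS j hf hj
        simp [hy'def, hj, hjF]
      · simp [hy'def, hj]
    have hdisj : Disjoint (S.filter fun j => x j = true) F :=
      disjoint_left.mpr (fun j hj hjF => hFS j hjF (mem_filter.mp hj).1)
    have h1 : wt y' = p + (wt y - p) := by
      unfold wt
      rw [he, card_union_of_disjoint hdisj, hFcard, ← hpdef]
      rfl
    omega
  calc f y = f y' := hw y y' hwt.symm
    _ = f x := h y' hagree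

lemma certC_le_of_ok {f : (Fin m → Bool) → Bool} {x : Fin m → Bool} {p q : ℕ}
    (h : Ok f x p q) (hp : p ≤ wt x) (hq : q ≤ m - wt x) : certC f x ≤ p + q := by
  have hones : p ≤ (univ.filter fun j => x j = true).card := hp
  obtain ⟨A, hA, hAcard⟩ := exists_subset_card_eq hones
  have hpart : (univ.filter fun j => x j = true).card
      + (univ.filter fun j => ¬ x j = true).card = m := by
    rw [card_filter_add_card_filter_not]; simp
  have hzeros : q ≤ (univ.filter fun j => ¬ x j = true).card := by
    unfold wt at hq; omega
  obtain ⟨B, hB, hBcard⟩ := exists_subset_card_eq hzeros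
  have hAones : ∀ j ∈ A, x j = true := fun j hj => (mem_filter.mp (hA hj)).2
  have hBzeros : ∀ j ∈ B, ¬ x j = true := fun j hj => (mem_filter.mp (hB hj)).2
  have hdisj : Disjoint A B := disjoint_left.mpr (fun j hjA hjB => hBzeros j hjB (hAones j hjA))
  refine le_trans (certC_le_of_isCert (S := A ∪ B) ?_) (by rw [card_union_of_disjoint hdisj, hAcard, hBcard])
  intro y hy
  refine h y ?_ ?_
  · rw [← hAcard]
    apply card_le_card
    intro j hj
    simp only [mem_filter, mem_univ, true_and]
    rw [hy j (mem_union_left _ hj)]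
    exact hAones j hj
  · unfold wt
    have hsub : (univ.filter fun j => y j = true) ⊆ univ \ B := by
      intro j hj
      simp only [mem_sdiff, mem_univ, true_and]
      intro hjB
      have hjy := (mem_filter.mp hj).2
      rw [hy j (mem_union_right _ hjB)] at hjy
      exact hBzeros j hjB hjy
    have := card_le_card hsub
    rw [card_sdiff_of_subset (subset_univ B), hBcard] at this
    simpa using this

lemma exists_ok_min {f : (Fin m → Bool) → Bool} (hw : WDet f) (x : Fin m → Bool) :
    ∃ p q, p + q = certC f x ∧ p ≤ wt x ∧ q ≤ m - wt x ∧ Ok f x p q := by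
  obtain ⟨S, hcard, hcert⟩ := exists_min_cert f x
  refine ⟨(S.filter fun j => x j = true).card, (S.filter fun j => ¬ x j = true).card,
    ?_, ?_, ?_, ok_of_isCert hw hcert⟩
  · rw [card_filter_add_card_filter_not]; exact hcard
  · exact card_le_card (filter_subset_filter _ (subset_univ S))
  · have hpart : (univ.filter fun j => x j = true).card
        + (univ.filter fun j => ¬ x j = true).card = m := by
      rw [card_filter_add_card_filter_not]; simp
    have := card_le_card (filter_subset_filter (fun j => ¬ x j = true) (subset_univ S))
    unfold wt
    omega

lemma isCert_pathset {T : DecTree (Fin m)} {f : (Fin m → Bool) → Bool}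
    (hT : Computes T f) (x : Fin m → Bool) : IsCert f x (Tree.pathset T x) := by
  intro y hy
  rw [← hT y, ← hT x]
  exact Tree.eval_eq_of_agree T x y hy

end Cert

section Main

open Finset

theorem main : ∀ (m : ℕ) (f : (Fin m → Bool) → Bool),
    WDet f →
    (∃ T : DecTree (Fin m), Computes T f ∧ ∀ x, T.queries x = certC f x) →
    (∃ a b : Fin m → Bool, f a ≠ f b) →
    ∀ (x : Fin m → Bool) (i : Fin m), x i = false → f (Function.update x i true) ≠ f x := by
  intro m
  induction m with
  | zero =>
    intro f _ _ hnc
    obtain ⟨a, b, hab⟩ := hnc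
    exact absurd (congrArg f (funext fun j => j.elim0)) hab
  | succ n ih =>
    rintro f hw ⟨T, hTc, hTq⟩ hnc
    cases T with
    | leaf b =>
      obtain ⟨a, c, hac⟩ := hnc
      exact absurd ((hTc a).symm.trans (hTc c)) hac
    | node i t0 t1 =>
      set T := DecTree.node i t0 t1 with hTdef
      have hpathcard : ∀ x : Fin (n+1) → Bool, (Tree.pathset T x).card = certC f x := by
        intro x
        have h1 := Tree.card_pathset_le T x
        have h2 := certC_le_of_isCert (isCert_pathset hTc x)
        rw [hTq x] at h1
        omega
      have hiP : ∀ x : Fin (n+1) → Bool, i ∈ Tree.pathset T x := by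
        intro x; rw [hTdef]; simp [Tree.pathset]
      have hq1 : ∀ x : Fin (n+1) → Bool, 1 ≤ certC f x := by
        intro x
        rw [← hTq x]
        have : T.queries x = 1 + (if x i then t1.queries x else t0.queries x) := rfl
        omega
      -- Step A : f cannot take the same value at weights n+1 and n
      have stepA : ∀ u v : Fin (n+1) → Bool, wt u = n + 1 → wt v = n → f u ≠ f v := by
        intro u v hu hv heq
        set xA : Fin (n+1) → Bool := fun j => !decide (j = i) with hxAdef
        have hwtA : wt xA = n := by
          unfold wt
          have he : (univ.filter fun j => xA j = true) = univ.erase i := by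
            ext j; simp [hxAdef]
          rw [he, card_erase_of_mem (mem_univ i)]
          simp
        set S := Tree.pathset T xA with hSdef
        have hScard : S.card = certC f xA := hpathcard xA
        have hScert : IsCert f xA S := isCert_pathset hTc xA
        have hfq : (S.filter fun j => ¬ xA j = true) = {i} := by
          ext j
          simp only [mem_filter, mem_singleton, hxAdef]
          constructor
          · rintro ⟨-, hj⟩
            simpa using hj
          · rintro rfl
            exact ⟨hiP xA, by simp⟩
        have hok := ok_of_isCert hw hScert
        rw [hfq] at hok
        simp only [card_singleton] at hok
        set p := (S.filter fun j => xA j = true).card with hpdef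
        have hpq : p + 1 = certC f xA := by
          have hpart := card_filter_add_card_filter_not (p := fun j => xA j = true) (s := S)
          rw [hfq] at hpart
          simp only [card_singleton] at hpart
          rw [← hScard]
          exact hpart
        have hok0 : Ok f xA p 0 := by
          intro y h1 h2
          by_cases hy : wt y ≤ n
          · exact hok y h1 (by omega)
          · have hytop : wt y = n + 1 := le_antisymm (wt_le y) (by omega)
            calc f y = f u := hw _ _ (by rw [hytop, hu])
              _ = f v := heq
              _ = f xA := hw _ _ (by rw [hv, hwtA])
        have hCle := certC_le f xA
        have hred := certC_le_of_ok hok0 (by rw [hwtA]; omega) (by omega)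
        have := hq1 xA
        omega
      -- Step B : f cannot take the same value at weights 0 and 1
      have stepB : ∀ u v : Fin (n+1) → Bool, wt u = 0 → wt v = 1 → f u ≠ f v := by
        intro u v hu hv heq
        set xB : Fin (n+1) → Bool := fun j => decide (j = i) with hxBdef
        have hwtB : wt xB = 1 := by
          unfold wt
          have he : (univ.filter fun j => xB j = true) = {i} := by
            ext j; simp [hxBdef]
          rw [he]; rfl
        set S := Tree.pathset T xB with hSdef
        have hScard : S.card = certC f xB := hpathcard xB
        have hScert : IsCert f xB S := isCert_pathset hTc xB
        have hfp : (S.filter fun j => xB j = true) = {i} := by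
          ext j
          simp only [mem_filter, mem_singleton, hxBdef]
          constructor
          · rintro ⟨-, hj⟩; simpa using hj
          · rintro rfl; exact ⟨hiP xB, by simp⟩
        have hok := ok_of_isCert hw hScert
        rw [hfp] at hok
        simp only [card_singleton] at hok
        set q := (S.filter fun j => ¬ xB j = true).card with hqdef
        have hpq : 1 + q = certC f xB := by
          have hpart := card_filter_add_card_filter_not (p := fun j => xB j = true) (s := S)
          rw [hfp] at hpart
          simp only [card_singleton] at hpart
          rw [← hScard]
          exact hpart
        have hok0 : Ok f xB 0 q := by
          intro y h1 h2
          by_cases hy : 1 ≤ wt y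
          · exact hok y hy h2
          · have hy0 : wt y = 0 := by omega
            calc f y = f u := hw _ _ (by rw [hy0, hu])
              _ = f v := heq
              _ = f xB := hw _ _ (by rw [hv, hwtB])
        have hCle := certC_le f xB
        have hred := certC_le_of_ok hok0 (by omega) (by rw [hwtB]; omega)
        have := hq1 xB
        omega
      intro x i' hxi'
      have hwle : wt x ≤ n := by
        have hsub : (univ.filter fun j => x j = true) ⊆ univ.erase i' := by
          intro j hj
          rcases mem_filter.mp hj with ⟨-, hjx⟩
          refine mem_erase.mpr ⟨fun hji => ?_, mem_univ j⟩
          rw [hji, hxi'] at hjx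
          exact Bool.false_ne_true hjx
        have hcard := card_le_card hsub
        rw [card_erase_of_mem (mem_univ i')] at hcard
        unfold wt
        simpa using hcard
      by_cases htop : wt x = n
      · exact stepA _ _ (by rw [wt_update_true x i' hxi', htop]) htop
      · have hxn : wt x < n := lt_of_le_of_ne hwle htop
        have hn1 : 1 ≤ n := by omega
        -- the restriction of f to x i = false
        set f' : (Fin n → Bool) → Bool := fun z => f (i.insertNth false z) with hf'def
        have hw' : WDet f' := by
          intro a b hab
          exact hw _ _ (by rw [wt_insertNth_false, wt_insertNth_false, hab])
        have hxzi : ∀ z : Fin n → Bool, (i.insertNth false z : Fin (n+1) → Bool) i = false := by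
          intro z; simp
        have hcert_rel : ∀ z : Fin n → Bool, certC f (i.insertNth false z) = certC f' z + 1 := by
          intro z
          have hwxz : wt (i.insertNth false z) = wt z := wt_insertNth_false i z
          have hzle : wt z ≤ n := wt_le z
          have hle1 : certC f (i.insertNth false z) ≤ certC f' z + 1 := by
            obtain ⟨p, q, hsum, hp, hq, hok⟩ := exists_ok_min hw' z
            have hokf : Ok f (i.insertNth false z) p (q+1) := by
              intro u h1 h2
              obtain ⟨z', hz'⟩ := exists_wt_eq (m := n) (wt u) (by omega)
              calc f u = f (i.insertNth false z') := hw _ _ (by rw [wt_insertNth_false, hz'])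
                _ = f' z' := rfl
                _ = f' z := hok z' (by omega) (by omega)
                _ = f (i.insertNth false z) := rfl
            have := certC_le_of_ok hokf (by omega) (by omega)
            omega
          have hle2 : certC f' z + 1 ≤ certC f (i.insertNth false z) := by
            obtain ⟨p, q, hsum, hp, hq, hok⟩ := exists_ok_min hw (i.insertNth false z)
            have hq1' : 1 ≤ q := by
              by_contra h0
              have h0' : q = 0 := by omega
              obtain ⟨u1, hu1⟩ := exists_wt_eq (m := n+1) (n+1) le_rfl
              obtain ⟨u0, hu0⟩ := exists_wt_eq (m := n+1) n (by omega)
              have e1 : f u1 = f (i.insertNth false z) := hok u1 (by omega) (by omega)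
              have e0 : f u0 = f (i.insertNth false z) := hok u0 (by omega) (by omega)
              exact stepA u1 u0 hu1 hu0 (e1.trans e0.symm)
            have hok' : Ok f' z p (q-1) := by
              intro z' h1 h2
              exact hok _ (by rw [wt_insertNth_false]; omega) (by rw [wt_insertNth_false]; omega)
            have := certC_le_of_ok hok' (by omega) (by omega)
            omega
          omega
        haveI hne : Nonempty (Fin n) := ⟨⟨0, by omega⟩⟩
        set hdn : Fin (n+1) → Fin n := Function.invFun i.succAbove with hhdef
        have hinv : ∀ k : Fin n, hdn (i.succAbove k) = k := fun k =>
          Function.leftInverse_invFun (Fin.succAbove_right_injective (p := i)) k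
        set t0' := Tree.restrict i false t0 with ht0'def
        have havoid : Tree.Avoids i t0' := Tree.avoids_restrict i false t0
        have hagree_off : ∀ z : Fin n → Bool, ∀ j, j ≠ i → (z ∘ hdn) j = (i.insertNth false z : Fin (n+1) → Bool) j := by
          intro z j hj
          obtain ⟨k, hk⟩ := Fin.exists_succAbove_eq hj
          rw [← hk]
          simp only [Function.comp_apply, hinv k]
          rw [Fin.insertNth_apply_succAbove]
        set T' : DecTree (Fin n) := Tree.map hdn t0' with hT'def
        have hT'eval : Computes T' f' := by
          intro z
          have hxzi' := hxzi z
          calc T'.eval z = t0'.eval (z ∘ hdn) := Tree.eval_map hdn t0' z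
            _ = t0'.eval (i.insertNth false z) :=
                Tree.eval_eq_of_agree_off t0' havoid _ _ (hagree_off z)
            _ = t0.eval (i.insertNth false z) := Tree.eval_restrict i false t0 _ hxzi'
            _ = f (i.insertNth false z) := by
                have hc := hTc (i.insertNth false z)
                rw [hTdef] at hc
                simpa [DecTree.eval, hxzi'] using hc
            _ = f' z := rfl
        have hT'q : ∀ z : Fin n → Bool, T'.queries z = certC f' z := by
          intro z
          set xz : Fin (n+1) → Bool := i.insertNth false z with hxzdef
          have hxzi' : xz i = false := hxzi z
          have e1 : certC f xz = 1 + t0.queries xz := by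
            rw [← hTq xz]
            show T.queries xz = _
            rw [hTdef]
            simp [DecTree.queries, hxzi']
          have hcins : IsCert f xz (insert i (Tree.pathset t0' xz)) := by
            intro y hy
            have hyi : y i = false := by rw [hy i (mem_insert_self i _)]; exact hxzi'
            have hagr : t0'.eval y = t0'.eval xz :=
              Tree.eval_eq_of_agree t0' xz y (fun j hj => hy j (mem_insert_of_mem hj))
            calc f y = T.eval y := (hTc y).symm
              _ = t0.eval y := by rw [hTdef]; simp [DecTree.eval, hyi]
              _ = t0'.eval y := (Tree.eval_restrict i false t0 y hyi).symm
              _ = t0'.eval xz := hagr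
              _ = t0.eval xz := Tree.eval_restrict i false t0 xz hxzi'
              _ = T.eval xz := by rw [hTdef]; simp [DecTree.eval, hxzi']
              _ = f xz := hTc xz
          have e2 : certC f xz ≤ 1 + (Tree.pathset t0' xz).card := by
            have hle := certC_le_of_isCert hcins
            have hc := card_insert_le i (Tree.pathset t0' xz)
            omega
          have e3 := Tree.card_pathset_le t0' xz
          have e4 : t0'.queries xz ≤ t0.queries xz := Tree.queries_restrict_le i false t0 xz hxzi'
          have e5 : certC f xz = certC f' z + 1 := hcert_rel z
          have key : t0'.queries xz = certC f' z := by omega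
          calc T'.queries z = t0'.queries (z ∘ hdn) := Tree.queries_map hdn t0' z
            _ = t0'.queries xz := Tree.queries_eq_of_agree_off t0' havoid _ _ (hagree_off z)
            _ = certC f' z := key
        have hnc' : ∃ a b : Fin n → Bool, f' a ≠ f' b := by
          obtain ⟨z1, hz1⟩ := exists_wt_eq (m := n) 1 hn1
          refine ⟨(fun _ => false), z1, ?_⟩
          apply stepB
          · rw [wt_insertNth_false]
            exact (wt_zero_iff _).mpr rfl
          · rw [wt_insertNth_false, hz1]
        have flip' := ih f' hw' ⟨T', hT'eval, hT'q⟩ hnc'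
        obtain ⟨z, hz⟩ := exists_wt_eq (m := n) (wt x) (by omega)
        obtain ⟨j, hj⟩ := wt_lt_exists_false (x := z) (by rw [hz]; exact hxn)
        have h1 := flip' z j hj
        have e1 : f' z = f x := hw _ _ (by rw [wt_insertNth_false, hz])
        have e2 : f' (Function.update z j true) = f (Function.update x i' true) := by
          apply hw
          rw [wt_insertNth_false, wt_update_true z j hj, wt_update_true x i' hxi', hz]
        intro hcontra
        exact h1 (e2.trans (hcontra.trans e1.symm))

end Main

section Symm

open Finset

lemma wdet_of_symm {n : ℕ} (f : (Fin n → Bool) → Bool)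
    (hsym : ∀ σ : Equiv.Perm (Fin n), ∀ x : Fin n → Bool, f (x ∘ σ) = f x) : WDet f := by
  intro x y hxy
  have hpart : ∀ w : Fin n → Bool, (univ.filter fun j => w j = true).card
      + (univ.filter fun j => ¬ w j = true).card = n := by
    intro w
    rw [card_filter_add_card_filter_not]; simp
  have hcard1 : Fintype.card {i // y i = true} = Fintype.card {i // x i = true} := by
    rw [Fintype.card_subtype, Fintype.card_subtype]
    exact hxy.symm
  have hcard2 : Fintype.card {i // ¬ y i = true} = Fintype.card {i // ¬ x i = true} := by
    rw [Fintype.card_subtype, Fintype.card_subtype]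
    have h1 := hpart x
    have h2 := hpart y
    unfold wt at hxy
    omega
  set e1 := Fintype.equivOfCardEq hcard1 with he1
  set e2 := Fintype.equivOfCardEq hcard2 with he2
  set σ : Equiv.Perm (Fin n) :=
    ((Equiv.sumCompl (fun i => y i = true)).symm.trans
      ((e1.sumCongr e2).trans (Equiv.sumCompl (fun i => x i = true)))) with hσ
  have hxσ : x ∘ σ = y := by
    funext j
    by_cases hj : y j = true
    · have : σ j = ↑(e1 ⟨j, hj⟩) := by
        rw [hσ]
        simp only [Equiv.trans_apply, Equiv.sumCongr_apply]
        rw [Equiv.sumCompl_symm_apply_of_pos (p := fun i => y i = true) hj]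
        simp
      rw [Function.comp_apply, this, hj]
      exact (e1 ⟨j, hj⟩).2
    · have : σ j = ↑(e2 ⟨j, hj⟩) := by
        rw [hσ]
        simp only [Equiv.trans_apply, Equiv.sumCongr_apply]
        rw [Equiv.sumCompl_symm_apply_of_neg (p := fun i => y i = true) hj]
        simp
      rw [Function.comp_apply, this]
      have h2 := (e2 ⟨j, hj⟩).2
      rw [Bool.not_eq_true] at h2 hj
      rw [h2, hj]
  rw [← hxσ]
  exact (hsym σ x).symm

end Symm

section Parity

open Finset

def parityChain {ι : Type} : List ι → Bool → DecTree ι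
  | [], acc => .leaf acc
  | i :: l, acc => .node i (parityChain l acc) (parityChain l (!acc))

lemma parityChain_queries {ι : Type} (l : List ι) (acc : Bool) (x : ι → Bool) :
    (parityChain l acc).queries x = l.length := by
  induction l generalizing acc with
  | nil => rfl
  | cons i l ihl =>
    show 1 + _ = _
    cases hx : x i <;> simp [hx, ihl, List.length_cons] <;> omega

lemma bool_eq_not_of_ne {a b : Bool} (h : a ≠ b) : a = !b := by
  cases a <;> cases b <;> simp_all

lemma bool_not_xor (a b : Bool) : (!(a ^^ b)) = (a ^^ (!b)) := by cases a <;> cases b <;> rfl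

lemma bool_xor_not (a b : Bool) : (a ^^ (!b)) = ((!a) ^^ b) := by cases a <;> cases b <;> rfl

lemma parityChain_eval {ι : Type} (l : List ι) (acc : Bool) (x : ι → Bool) :
    (parityChain l acc).eval x = (acc ^^ decide (Odd (l.countP fun i => x i))) := by
  induction l generalizing acc with
  | nil => simp [parityChain, DecTree.eval]
  | cons i l ihl =>
    show (if x i = true then (parityChain l (!acc)).eval x else (parityChain l acc).eval x) = _
    cases hx : x i
    · rw [if_neg (by simp), ihl]
      congr 2
      simp [List.countP_cons, hx]
    · rw [if_pos rfl, ihl]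
      have hc : ((i :: l).countP fun i => x i) = (l.countP fun i => x i) + 1 := by
        simp [List.countP_cons, hx]
      rw [hc]
      have : decide (Odd ((l.countP fun i => x i) + 1)) = !decide (Odd (l.countP fun i => x i)) := by
        rw [← decide_not]
        exact decide_eq_decide.mpr Nat.odd_add_one
      rw [this, bool_xor_not]

lemma countP_univ_toList {n : ℕ} (x : Fin n → Bool) :
    ((Finset.univ : Finset (Fin n)).toList.countP fun i => x i) = wt x := by
  have hfun : (fun i => x i) = (fun b => decide (x b = true)) := by
    funext b; cases x b <;> simp
  rw [hfun]
  rw [show (Finset.univ : Finset (Fin n)).toList = (Finset.univ : Finset (Fin n)).val.toList from rfl]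
  have h2 := Multiset.coe_countP (p := fun i => x i = true) (Finset.univ : Finset (Fin n)).val.toList
  rw [Multiset.coe_toList] at h2
  rw [← h2, Multiset.countP_eq_card_filter]
  rfl

lemma parity_flip {n : ℕ} (x : Fin n → Bool) (i : Fin n) :
    Odd (wt (Function.update x i (!(x i)))) ↔ ¬ Odd (wt x) := by
  cases hxi : x i
  · show Odd (wt (Function.update x i true)) ↔ _
    rw [wt_update_true x i hxi, Nat.odd_add_one]
  · show Odd (wt (Function.update x i false)) ↔ _
    have h := wt_update_false x i hxi
    rw [← h, Nat.odd_add_one, not_not]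

lemma parity_certC {n : ℕ} (f : (Fin n → Bool) → Bool) (c : Bool)
    (hf : ∀ x, f x = (c ^^ decide (Odd (wt x)))) (x : Fin n → Bool) : certC f x = n := by
  obtain ⟨S, hcard, hcert⟩ := exists_min_cert f x
  have hSuniv : S = univ := by
    rw [Finset.eq_univ_iff_forall]
    intro i
    by_contra hi
    have hagree : ∀ j ∈ S, Function.update x i (!(x i)) j = x j := fun j hj =>
      Function.update_of_ne (fun h => hi (by rw [← h]; exact hj)) _ _
    have heq := hcert _ hagree
    rw [hf, hf x] at heq
    have hodd : decide (Odd (wt (Function.update x i (!(x i))))) = !decide (Odd (wt x)) := by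
      rw [← decide_not]
      exact decide_eq_decide.mpr (parity_flip x i)
    rw [hodd] at heq
    cases c <;> cases hdd : decide (Odd (wt x)) <;> rw [hdd] at heq <;> simp at heq
  rw [hSuniv] at hcard
  simpa using hcard.symm

lemma parity_tree {n : ℕ} (f : (Fin n → Bool) → Bool) (c : Bool)
    (hf : ∀ x, f x = (c ^^ decide (Odd (wt x)))) :
    ∃ T : DecTree (Fin n), Computes T f ∧ ∀ x : Fin n → Bool, T.queries x = certC f x := by
  refine ⟨parityChain (Finset.univ : Finset (Fin n)).toList c, ?_, ?_⟩
  · intro x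
    rw [parityChain_eval, countP_univ_toList, hf x]
  · intro x
    rw [parityChain_queries, Finset.length_toList, parity_certC f c hf x]
    simp

end Parity

end ICHelp


/-- A non-constant symmetric Boolean function has instance complexity `1`
(a decision tree computing it with `T(x) = C(f,x)` on every input) iff it is
the parity function `XOR_n` or its negation. -/
theorem symm_instC_one_iff_parity (n : ℕ) (f : (Fin n → Bool) → Bool)
    (hsym : ∀ σ : Equiv.Perm (Fin n), ∀ x : Fin n → Bool, f (x ∘ σ) = f x)
    (hnc : ∃ x y : Fin n → Bool, f x ≠ f y) :
    (∃ T : DecTree (Fin n), Computes T f ∧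
        ∀ x : Fin n → Bool, T.queries x = certC f x) ↔
      ((∀ x : Fin n → Bool, f x = decide (Odd (wt x))) ∨
        (∀ x : Fin n → Bool, f x = !decide (Odd (wt x)))) := by
  constructor
  · rintro ⟨T, hTc, hTq⟩
    have hw : ICHelp.WDet f := ICHelp.wdet_of_symm f hsym
    have flip := ICHelp.main n f hw ⟨T, hTc, hTq⟩ hnc
    have hform : ∀ k, ∀ x : Fin n → Bool, wt x = k →
        f x = ((f fun _ => false) ^^ decide (Odd k)) := by
      intro k
      induction k with
      | zero =>
        intro x hx
        have hx0 : x = fun _ => false := (ICHelp.wt_zero_iff x).mp hx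
        rw [hx0]
        simp
      | succ k ihk =>
        intro x hx
        have hpos : 0 < (Finset.univ.filter fun j => x j = true).card := by
          unfold wt at hx; omega
        obtain ⟨i, hi⟩ := Finset.card_pos.mp hpos
        have hxi : x i = true := (Finset.mem_filter.mp hi).2
        set x' : Fin n → Bool := Function.update x i false with hx'def
        have hx'i : x' i = false := by simp [hx'def]
        have hxx' : Function.update x' i true = x := by
          funext j
          by_cases hj : j = i
          · subst hj; simp [hx'def, hxi]
          · simp [hx'def, Function.update_of_ne hj]
        have hwx' : wt x' = k := by
          have hh := ICHelp.wt_update_false x i hxi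
          rw [← hx'def] at hh
          omega
        have hne := flip x' i hx'i
        rw [hxx', ihk x' hwx'] at hne
        have hflip : f x = !((f fun _ => false) ^^ decide (Odd k)) :=
          ICHelp.bool_eq_not_of_ne hne
        rw [hflip]
        have hd : decide (Odd (k+1)) = !decide (Odd k) := by
          rw [← decide_not]
          exact decide_eq_decide.mpr Nat.odd_add_one
        rw [hd, ICHelp.bool_not_xor]
    cases hc : f (fun _ => false)
    · left
      intro x
      have hh := hform (wt x) x rfl
      rw [hc] at hh
      simpa using hh
    · right
      intro x
      have hh := hform (wt x) x rfl
      rw [hc] at hh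
      simpa using hh
  · rintro (hf | hf)
    · exact ICHelp.parity_tree f false (fun x => by rw [hf x]; simp)
    · exact ICHelp.parity_tree f true (fun x => by rw [hf x]; simp)
end

section
/- Let n ≥ 2 and let CONN be the Boolean function on the C(n,2) edge-indicator variables of a simple graph on vertex set [n] that outputs 1 iff the graph is connected. Then the instance complexity of CONN equals C(n,2)/(n−1): (i) there exists a decision tree T computing CONN such that for every graph G, T(G)·(n−1) ≤ C(n,2)·C(CONN,G), and (ii) for every decision tree T computing CONN there exists a graph G with T(G)·(n−1) ≥ C(n,2)·C(CONN,G). -/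
/-- The index set of edge-indicator variables: unordered pairs of distinct
vertices of `Fin n`. -/
def Edge (n : ℕ) : Type := {e : Sym2 (Fin n) // ¬ e.IsDiag}

instance (n : ℕ) : Fintype (Edge n) := by unfold Edge; infer_instance
instance (n : ℕ) : DecidableEq (Edge n) := by unfold Edge; infer_instance

/-- The simple graph on `[n]` determined by an edge-indicator input `x`. -/
def graphOf {n : ℕ} (x : Edge n → Bool) : SimpleGraph (Fin n) :=
  SimpleGraph.fromEdgeSet {e : Sym2 (Fin n) | ∃ h : ¬ e.IsDiag, x ⟨e, h⟩ = true}

open scoped Classical in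
/-- The connectivity property as a Boolean function of the edge indicators. -/
noncomputable def CONNb (n : ℕ) (x : Edge n → Bool) : Bool :=
  decide (graphOf x).Connected

open scoped Classical in
/-- The `k`-clique property as a Boolean function of the edge indicators. -/
noncomputable def CLb (n k : ℕ) (x : Edge n → Bool) : Bool :=
  decide (∃ s : Finset (Fin n), (graphOf x).IsNClique k s)


/-! ### Auxiliary definitions and lemmas -/

section Aux

open SimpleGraph

variable {V : Type*}

private lemma reach_aux' {G G' : SimpleGraph V} {c d : V}
    (hsub : ∀ a b, G.Adj a b → s(a, b) = s(c, d) ∨ G'.Adj a b) :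
    ∀ {a t : V}, G.Walk a t → G'.Reachable c t → G'.Reachable d t → G'.Reachable a t := by
  intro a t w
  induction w with
  | nil => exact fun _ _ => Reachable.refl _
  | cons h p ih =>
    intro hc hd
    rcases hsub _ _ h with he | he
    · rw [Sym2.eq_iff] at he
      rcases he with ⟨rfl, rfl⟩ | ⟨rfl, rfl⟩
      · exact hc
      · exact hd
    · exact he.reachable.trans (ih hc hd)

private lemma connected_delete' {G : SimpleGraph V} {c d : V}
    (hG : G.Connected) (h : (G \ SimpleGraph.fromEdgeSet {s(c, d)}).Reachable c d) :
    (G \ SimpleGraph.fromEdgeSet {s(c, d)}).Connected := by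
  have hne : Nonempty V := hG.nonempty
  rw [connected_iff_exists_forall_reachable]
  refine ⟨d, fun w => ?_⟩
  have hsub : ∀ a b, G.Adj a b →
      s(a, b) = s(c, d) ∨ (G \ SimpleGraph.fromEdgeSet {s(c, d)}).Adj a b := by
    intro a b hab
    by_cases he : s(a, b) = s(c, d)
    · exact Or.inl he
    · exact Or.inr (by simp [sdiff_adj, fromEdgeSet_adj, hab, he])
  exact (reach_aux' hsub ((hG.preconnected w d).some) h (Reachable.refl _)).symm

private lemma conn_card_le' [Fintype V] :
    ∀ (k : ℕ) (G : SimpleGraph V) [Fintype G.edgeSet], G.Connected →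
      G.edgeFinset.card = k → Fintype.card V ≤ k + 1 := by
  intro k
  induction k using Nat.strong_induction_on with
  | _ k ih =>
    intro G hfin hG hk
    classical
    by_cases hac : G.IsAcyclic
    · have := IsTree.card_edgeFinset ⟨hG, hac⟩
      omega
    · rw [isAcyclic_iff_forall_edge_isBridge] at hac
      push_neg at hac
      obtain ⟨e, heG, hbr⟩ := hac
      induction e using Sym2.ind with
      | _ c d =>
        rw [isBridge_iff] at hbr
        push_neg at hbr
        have hreach : (G \ SimpleGraph.fromEdgeSet {s(c, d)}).Reachable c d := hbr
        have hconn := connected_delete' hG hreach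
        have hes : (G \ SimpleGraph.fromEdgeSet {s(c, d)}).edgeFinset =
            G.edgeFinset.erase s(c, d) := by
          ext f
          simp only [mem_edgeFinset, Finset.mem_erase, edgeSet_sdiff, edgeSet_fromEdgeSet,
            edgeSet_sdiff_sdiff_isDiag, Set.mem_diff, Set.mem_singleton_iff]
          tauto
        have hk1 : 1 ≤ G.edgeFinset.card :=
          Finset.card_pos.mpr ⟨_, mem_edgeFinset.mpr heG⟩
        have hcard : (G \ SimpleGraph.fromEdgeSet {s(c, d)}).edgeFinset.card = k - 1 := by
          rw [hes, Finset.card_erase_of_mem (mem_edgeFinset.mpr heG), hk]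
        have := ih (k - 1) (by omega) _ hconn hcard
        omega

end Aux

section EdgeAux

open SimpleGraph

variable {n : ℕ}

private lemma mem_edgeSet_iff' (x : Edge n → Bool) (e : Edge n) :
    e.1 ∈ (graphOf x).edgeSet ↔ x e = true := by
  obtain ⟨e, he⟩ := e
  simp only [graphOf, edgeSet_fromEdgeSet, Set.mem_diff, Set.mem_setOf_eq]
  constructor
  · rintro ⟨⟨h, hx⟩, _⟩; exact hx
  · intro hx; exact ⟨⟨he, hx⟩, he⟩

private lemma card_edge' (n : ℕ) : Fintype.card (Edge n) = n.choose 2 := by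
  have : Fintype.card (Edge n) = Fintype.card {e : Sym2 (Fin n) // ¬ e.IsDiag} :=
    Fintype.card_congr (Equiv.refl _)
  rw [this, Sym2.card_subtype_not_diag, Fintype.card_fin]

private lemma graphOf_mono' {x y : Edge n → Bool} (h : ∀ e, x e = true → y e = true) :
    graphOf x ≤ graphOf y := by
  apply SimpleGraph.fromEdgeSet_mono
  rintro e ⟨he, hx⟩
  exact ⟨he, h _ hx⟩

private lemma edge_exists_rep (e : Edge n) : ∃ a b : Fin n, a ≠ b ∧ e.1 = s(a, b) := by
  obtain ⟨e, he⟩ := e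
  induction e using Sym2.ind with
  | _ a b =>
    rw [Sym2.mk_isDiag_iff] at he
    exact ⟨a, b, he, rfl⟩

private lemma adj_iff' (x : Edge n → Bool) {a b : Fin n} (hab : a ≠ b) :
    (graphOf x).Adj a b ↔ x ⟨s(a, b), by simpa [Sym2.mk_isDiag_iff] using hab⟩ = true := by
  rw [← SimpleGraph.mem_edgeSet, mem_edgeSet_iff' x ⟨s(a,b), _⟩]

private lemma graphOf_update_false' (x : Edge n → Bool) (g : Edge n) :
    graphOf (Function.update x g false) = graphOf x \ SimpleGraph.fromEdgeSet {g.1} := by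
  ext a b
  by_cases hab : a ≠ b
  · rw [adj_iff' _ hab, sdiff_adj, adj_iff' _ hab, fromEdgeSet_adj]
    by_cases hg : (⟨s(a,b), by simpa [Sym2.mk_isDiag_iff] using hab⟩ : Edge n) = g
    · subst hg
      simp [Function.update_self, hab]
      exact Function.update_self ..
    · erw [Function.update_of_ne hg]
      have : ¬ (s(a, b) = g.1) := fun h => hg (Subtype.ext h)
      simp [this, hab]
  · push_neg at hab
    subst hab
    simp

private lemma connb_true {x : Edge n → Bool} : CONNb n x = true ↔ (graphOf x).Connected := by
  simp [CONNb]

private lemma card_edgeFinset_eq' (y : Edge n → Bool) [Fintype (graphOf y).edgeSet] :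
    (graphOf y).edgeFinset.card =
      (Finset.univ.filter (fun e : Edge n => y e = true)).card := by
  classical
  refine (Finset.card_bij (fun (e : Edge n) _ => e.1) ?_ ?_ ?_).symm
  · intro e he
    rw [mem_edgeFinset, mem_edgeSet_iff']
    exact (Finset.mem_filter.mp he).2
  · intro e1 _ e2 _ h
    exact Subtype.ext h
  · intro s hs
    rw [mem_edgeFinset] at hs
    have hnd : ¬ s.IsDiag := (graphOf y).not_isDiag_of_mem_edgeSet hs
    refine ⟨⟨s, hnd⟩, ?_, rfl⟩
    apply Finset.mem_filter.mpr
    exact ⟨Finset.mem_univ _, (mem_edgeSet_iff' y ⟨s, hnd⟩).mp hs⟩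

private lemma leaf_step (x : Edge n → Bool) (Q : Finset (Edge n))
    (ha : ∀ e ∉ Q, x e = true)
    (hc : ∀ e ∈ Q, x e = true → ¬ (graphOf (Function.update x e false)).Connected)
    (hy0conn : (graphOf (fun g => if g ∈ Q then x g else false)).Connected)
    (estar : Edge n) (hes : estar ∉ Q) : False := by
  set y0 : Edge n → Bool := fun g => if g ∈ Q then x g else false with hy0
  obtain ⟨u, v, huv, hval⟩ := edge_exists_rep estar
  have hxe : x estar = true := ha _ hes
  have hy0e : y0 estar = false := by simp [hy0, hes]
  obtain ⟨p, hp⟩ := (hy0conn.preconnected u v).some.toPath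
  cases p with
  | nil => exact huv rfl
  | @cons _ w _ h' p' =>
    have hnw : u ≠ w := h'.ne
    set f0 : Edge n := ⟨s(u, w), by simpa [Sym2.mk_isDiag_iff] using hnw⟩ with hf0
    have hy0f0 : y0 f0 = true := (adj_iff' y0 hnw).mp h'
    have hf0Q : f0 ∈ Q := by
      by_contra hq; simp [hy0, hq] at hy0f0
    have hxf0 : x f0 = true := by simpa [hy0, hf0Q] using hy0f0
    have hef : estar ≠ f0 := fun h => by rw [h, hy0f0] at hy0e; exact absurd hy0e (by simp)
    set z : Edge n → Bool := Function.update (Function.update y0 estar true) f0 false with hz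
    have hzval : ∀ g : Edge n, g ≠ f0 → (g = estar ∨ y0 g = true) → z g = true := by
      intro g hgf hg
      rw [hz, Function.update_of_ne hgf]
      rcases hg with rfl | hg
      · rw [Function.update_self]
      · rcases eq_or_ne g estar with rfl | hge
        · rw [Function.update_self]
        · rwa [Function.update_of_ne hge]
    have hAdjuv : (graphOf z).Adj u v := by
      rw [adj_iff' z huv]
      have heq : (⟨s(u,v), by simpa [Sym2.mk_isDiag_iff] using huv⟩ : Edge n) = estar :=
        Subtype.ext hval.symm
      rw [heq]
      exact hzval estar hef (Or.inl rfl)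
    have hnodup := hp.edges_nodup
    rw [SimpleGraph.Walk.edges_cons] at hnodup
    have hfirst : s(u, w) ∉ p'.edges := (List.nodup_cons.mp hnodup).1
    have htrans : ∀ e ∈ p'.edges, e ∈ (graphOf z).edgeSet := by
      intro e he
      have heS := p'.edges_subset_edgeSet he
      have hnd : ¬ e.IsDiag := (graphOf y0).not_isDiag_of_mem_edgeSet heS
      have hev : y0 ⟨e, hnd⟩ = true := (mem_edgeSet_iff' y0 ⟨e, hnd⟩).mp heS
      have hgf : (⟨e, hnd⟩ : Edge n) ≠ f0 := by
        intro hgg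
        apply hfirst
        have : e = s(u, w) := congrArg Subtype.val hgg
        rwa [this] at he
      have := hzval ⟨e, hnd⟩ hgf (Or.inr hev)
      exact (mem_edgeSet_iff' z ⟨e, hnd⟩).mpr this
    have hwv : (graphOf z).Reachable w v := ⟨p'.transfer _ htrans⟩
    have huvR : (graphOf z).Reachable u v := hAdjuv.reachable
    have hall : ∀ a : Fin n, (graphOf z).Reachable a v := by
      intro a
      have hsub : ∀ a b : Fin n, (graphOf y0).Adj a b →
          s(a, b) = s(u, w) ∨ (graphOf z).Adj a b := by
        intro a b hab
        have hne := hab.ne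
        have hv : y0 ⟨s(a,b), by simpa [Sym2.mk_isDiag_iff] using hne⟩ = true :=
          (adj_iff' y0 hne).mp hab
        rcases eq_or_ne (⟨s(a,b), by simpa [Sym2.mk_isDiag_iff] using hne⟩ : Edge n) f0 with
          hgg | hgg
        · exact Or.inl (congrArg Subtype.val hgg)
        · exact Or.inr ((adj_iff' z hne).mpr (hzval _ hgg (Or.inr hv)))
      exact reach_aux' hsub (hy0conn.preconnected a v).some huvR hwv
    have hzconn : (graphOf z).Connected :=
      (connected_iff_exists_forall_reachable _).mpr ⟨v, fun a => (hall a).symm⟩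
    refine hc f0 hf0Q hxf0 (hzconn.mono (graphOf_mono' ?_))
    intro g hg
    rcases eq_or_ne g f0 with rfl | hgf
    · rw [hz] at hg; rw [Function.update_self] at hg; exact absurd hg (by simp)
    · rw [Function.update_of_ne hgf]
      rw [hz, Function.update_of_ne hgf] at hg
      rcases eq_or_ne g estar with rfl | hge
      · exact hxe
      · rw [Function.update_of_ne hge] at hg
        by_cases hq : g ∈ Q
        · simpa [hy0, hq] using hg
        · exact ha _ hq

private lemma main_ind {n : ℕ} (T : DecTree (Edge n)) :
    ∀ (x : Edge n → Bool) (Q : Finset (Edge n)),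
    (∀ e ∉ Q, x e = true) →
    (graphOf x).Connected →
    (∀ e ∈ Q, x e = true → ¬ (graphOf (Function.update x e false)).Connected) →
    (∀ y : Edge n → Bool, (∀ e ∈ Q, y e = x e) → T.eval y = CONNb n y) →
    ∃ x' : Edge n → Bool,
      (∀ e ∈ Q, x' e = x e) ∧
      (graphOf x').Connected ∧
      (∀ e, x' e = true → ¬ (graphOf (Function.update x' e false)).Connected) ∧
      Fintype.card (Edge n) ≤ Q.card + T.queries x' := by
  induction T with
  | leaf b =>
    intro x Q ha hb hc hf
    have hQ : Q = Finset.univ := by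
      by_contra hne
      obtain ⟨estar, hes⟩ : ∃ e : Edge n, e ∉ Q := by
        by_contra h
        push_neg at h
        exact hne (Finset.eq_univ_of_forall h)
      have hfx : b = CONNb n x := hf x (fun _ _ => rfl)
      have hbx : b = true := by rw [hfx, connb_true]; exact hb
      have hfy : b = CONNb n (fun g => if g ∈ Q then x g else false) := by
        apply hf
        intro e he
        simp [he]
      have hy0conn : (graphOf (fun g => if g ∈ Q then x g else false)).Connected := by
        rw [← connb_true, ← hfy, hbx]
      exact leaf_step x Q ha hc hy0conn estar hes
    refine ⟨x, fun _ _ => rfl, hb, ?_, ?_⟩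
    · intro e he
      exact hc e (hQ ▸ Finset.mem_univ e) he
    · have : Fintype.card (Edge n) = Q.card := by
        rw [hQ, Finset.card_univ]
      simp [DecTree.queries, this]
  | node i t0 t1 ih0 ih1 =>
    intro x Q ha hb hc hf
    by_cases hdec : (graphOf (Function.update x i false)).Connected
    · -- answer "absent": go to the false branch
      set x1 := Function.update x i false with hx1
      have hxQ : i ∈ Q → x i = false := by
        intro hiQ
        by_contra hxi
        exact hc i hiQ (by simpa using hxi) hdec
      have a1 : ∀ e ∉ insert i Q, x1 e = true := by
        intro e he
        rw [Finset.mem_insert, not_or] at he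
        rw [hx1, Function.update_of_ne he.1]
        exact ha e he.2
      have c1 : ∀ e ∈ insert i Q, x1 e = true →
          ¬ (graphOf (Function.update x1 e false)).Connected := by
        intro e he hxe hconn
        have hei : e ≠ i := by
          intro h
          rw [hx1, h, Function.update_self] at hxe
          exact absurd hxe (by simp)
        have heQ : e ∈ Q := by
          rcases Finset.mem_insert.mp he with h | h
          · exact absurd h hei
          · exact h
        have hxe' : x e = true := by rwa [hx1, Function.update_of_ne hei] at hxe
        apply hc e heQ hxe'
        apply hconn.mono (graphOf_mono' ?_)
        intro g hg
        rcases eq_or_ne g e with rfl | hge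
        · rw [Function.update_self] at hg
          exact absurd hg (by simp)
        · rw [Function.update_of_ne hge] at hg ⊢
          rcases eq_or_ne g i with rfl | hgi
          · rw [hx1, Function.update_self] at hg
            exact absurd hg (by simp)
          · rwa [hx1, Function.update_of_ne hgi] at hg
      have f1 : ∀ y : Edge n → Bool, (∀ e ∈ insert i Q, y e = x1 e) →
          t0.eval y = CONNb n y := by
        intro y hy
        have hyi : y i = false := by
          have := hy i (Finset.mem_insert_self i Q)
          rwa [hx1, Function.update_self] at this
        have hyQ : ∀ e ∈ Q, y e = x e := by
          intro e he
          rcases eq_or_ne e i with rfl | hei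
          · rw [hyi, hxQ he]
          · rw [hy e (Finset.mem_insert_of_mem he), hx1, Function.update_of_ne hei]
        have := hf y hyQ
        rw [← this]
        simp [DecTree.eval, hyi]
      obtain ⟨x', h0, h2, h3, h4⟩ := ih0 x1 (insert i Q) a1 hdec c1 f1
      have hx'i : x' i = false := by
        rw [h0 i (Finset.mem_insert_self i Q), hx1, Function.update_self]
      refine ⟨x', ?_, h2, h3, ?_⟩
      · intro e he
        rcases eq_or_ne e i with rfl | hei
        · rw [hx'i, hxQ he]
        · rw [h0 e (Finset.mem_insert_of_mem he), hx1, Function.update_of_ne hei]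
      · have hq : (DecTree.node i t0 t1).queries x' = 1 + t0.queries x' := by
          simp [DecTree.queries, hx'i]
        have hcard := Finset.card_insert_le i Q
        omega
    · -- answer "present": go to the true branch
      have hxi : x i = true := by
        by_contra hxi
        have hxi' : x i = false := by simpa using hxi
        have : Function.update x i false = x := by
          funext g
          rcases eq_or_ne g i with rfl | hgi
          · rw [Function.update_self, hxi']
          · rw [Function.update_of_ne hgi]
        rw [this] at hdec
        exact hdec hb
      have a1 : ∀ e ∉ insert i Q, x e = true := fun e he =>
        ha e (fun h => he (Finset.mem_insert_of_mem h))
      have c1 : ∀ e ∈ insert i Q, x e = true →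
          ¬ (graphOf (Function.update x e false)).Connected := by
        intro e he hxe
        rcases Finset.mem_insert.mp he with rfl | h
        · exact hdec
        · exact hc e h hxe
      have f1 : ∀ y : Edge n → Bool, (∀ e ∈ insert i Q, y e = x e) →
          t1.eval y = CONNb n y := by
        intro y hy
        have hyi : y i = true := by rw [hy i (Finset.mem_insert_self i Q), hxi]
        have := hf y (fun e he => hy e (Finset.mem_insert_of_mem he))
        rw [← this]
        simp [DecTree.eval, hyi]
      obtain ⟨x', h0, h2, h3, h4⟩ := ih1 x (insert i Q) a1 hb c1 f1
      have hx'i : x' i = true := by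
        rw [h0 i (Finset.mem_insert_self i Q), hxi]
      refine ⟨x', fun e he => h0 e (Finset.mem_insert_of_mem he), h2, h3, ?_⟩
      have hq : (DecTree.node i t0 t1).queries x' = 1 + t1.queries x' := by
        simp [DecTree.queries, hx'i]
      have hcard := Finset.card_insert_le i Q
      omega

private lemma certC_lb (n : ℕ) (hn : 2 ≤ n) (x : Edge n → Bool) :
    n - 1 ≤ certC (CONNb n) x := by
  classical
  have hne : {k | ∃ S : Finset (Edge n), S.card = k ∧ IsCert (CONNb n) x S}.Nonempty := by
    refine ⟨(Finset.univ : Finset (Edge n)).card, Finset.univ, rfl, ?_⟩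
    intro y hy
    have : y = x := funext fun e => hy e (Finset.mem_univ e)
    rw [this]
  obtain ⟨S, hScard, hScert⟩ := Nat.sInf_mem hne
  rw [certC] at *
  rw [← hScard]
  by_cases hconn : (graphOf x).Connected
  · -- connected case: a certificate must contain a connected spanning subgraph
    set y : Edge n → Bool := fun e => if e ∈ S then x e else false with hy
    have hagree : ∀ e ∈ S, y e = x e := by intro e he; simp [hy, he]
    have hyx := hScert y hagree
    have hyconn : (graphOf y).Connected := by
      rw [← connb_true, hyx, connb_true]; exact hconn
    have hcle := conn_card_le' ((graphOf y).edgeFinset.card) (graphOf y) hyconn rfl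
    rw [Fintype.card_fin] at hcle
    have hsub : (Finset.univ.filter (fun e : Edge n => y e = true)) ⊆ S := by
      intro e he
      rw [Finset.mem_filter] at he
      by_contra hS
      simp [hy, hS] at he
    have := Finset.card_le_card hsub
    rw [card_edgeFinset_eq' y] at hcle
    omega
  · -- disconnected case: a certificate must contain a full cut
    set y : Edge n → Bool := fun e => if e ∈ S then x e else true with hy
    have hagree : ∀ e ∈ S, y e = x e := by intro e he; simp [hy, he]
    have hyx := hScert y hagree
    have hyconn : ¬ (graphOf y).Connected := by
      intro h
      exact hconn (connb_true.mp (by rw [← hyx, connb_true]; exact h))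
    have hnemp : Nonempty (Fin n) := ⟨⟨0, by omega⟩⟩
    have hpre : ¬ (graphOf y).Preconnected := by
      intro h
      exact hyconn ((connected_iff _).mpr ⟨h, hnemp⟩)
    rw [SimpleGraph.Preconnected] at hpre
    push_neg at hpre
    obtain ⟨u, v, hr⟩ := hpre
    set A : Finset (Fin n) := Finset.univ.filter (fun a => (graphOf y).Reachable u a) with hA
    have huA : u ∈ A := Finset.mem_filter.mpr ⟨Finset.mem_univ _, SimpleGraph.Reachable.refl u⟩
    have hvA : v ∉ A := by
      rw [hA, Finset.mem_filter]
      exact fun h => hr h.2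
    have hcut : ∀ a ∈ A, ∀ b ∈ Aᶜ, a ≠ b ∧
        ∀ h : a ≠ b, (⟨s(a, b), by simpa [Sym2.mk_isDiag_iff] using h⟩ : Edge n) ∈ S := by
      intro a haA b hbA
      rw [Finset.mem_compl] at hbA
      have hra : (graphOf y).Reachable u a := by
        rw [hA, Finset.mem_filter] at haA
        exact haA.2
      have hrb : ¬ (graphOf y).Reachable u b := by
        intro h
        exact hbA (by simp [hA, h])
      have hab : a ≠ b := by rintro rfl; exact hrb hra
      refine ⟨hab, fun h => ?_⟩
      have hnadj : ¬ (graphOf y).Adj a b := fun hadj => hrb (hra.trans hadj.reachable)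
      rw [adj_iff' y h] at hnadj
      by_contra hS
      apply hnadj
      simp only [hy]; exact if_neg hS
    have e0 : Edge n := ⟨s(⟨0, by omega⟩, ⟨1, by omega⟩),
      by simp [Sym2.mk_isDiag_iff, Fin.ext_iff]⟩
    have hinj : (A ×ˢ Aᶜ).card ≤ S.card := by
      apply Finset.card_le_card_of_injOn
        (fun p => if h : p.1 ≠ p.2 then
          (⟨s(p.1, p.2), by simpa [Sym2.mk_isDiag_iff] using h⟩ : Edge n) else e0)
      · intro p hp
        rw [Finset.mem_coe, Finset.mem_product] at hp
        obtain ⟨hab, hmem⟩ := hcut p.1 hp.1 p.2 hp.2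
        apply Finset.mem_coe.mpr
        exact Eq.mpr (congrArg (· ∈ S) (dif_pos hab)) (hmem hab)
      · intro p hp q hq hfe
        rw [Finset.mem_coe, Finset.mem_product] at hp hq
        obtain ⟨habp, _⟩ := hcut p.1 hp.1 p.2 hp.2
        obtain ⟨habq, _⟩ := hcut q.1 hq.1 q.2 hq.2
        dsimp only at hfe
        have hfe2 := (dif_pos habp).symm.trans (hfe.trans (dif_pos habq))
        have := congrArg Subtype.val hfe2
        simp only [Sym2.eq_iff] at this
        rcases this with ⟨h1, h2⟩ | ⟨h1, h2⟩
        · exact Prod.ext h1 h2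
        · exfalso
          have : p.1 ∈ Aᶜ := by rw [h1]; exact hq.2
          rw [Finset.mem_compl] at this
          exact this hp.1
    rw [Finset.card_product, Finset.card_compl, Fintype.card_fin] at hinj
    have h1 : 1 ≤ A.card := Finset.card_pos.mpr ⟨u, huA⟩
    have h2 : 1 ≤ n - A.card := by
      have hvc : v ∈ Aᶜ := Finset.mem_compl.mpr hvA
      have := Finset.card_pos.mpr ⟨v, hvc⟩
      rwa [Finset.card_compl, Fintype.card_fin] at this
    have hle : A.card ≤ n := by
      have := Finset.card_le_univ A
      rwa [Fintype.card_fin] at this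
    obtain ⟨a', ha'⟩ := Nat.exists_eq_add_of_le h1
    obtain ⟨b', hb'⟩ := Nat.exists_eq_add_of_le h2
    have key : A.card * (n - A.card) = a' * b' + (a' + b' + 1) := by
      rw [hb', ha']; ring
    have h4 : n - 1 = a' + b' + 1 := by omega
    refine le_trans ?_ hinj
    rw [key, h4]
    exact Nat.le_add_left _ _



private def bigT {ι : Type} [DecidableEq ι] (f : (ι → Bool) → Bool) :
    List ι → (ι → Bool) → DecTree ι
  | [], acc => .leaf (f acc)
  | i :: l, acc =>
      .node i (bigT f l (Function.update acc i false)) (bigT f l (Function.update acc i true))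

private lemma bigT_eval {ι : Type} [DecidableEq ι] (f : (ι → Bool) → Bool) :
    ∀ (l : List ι) (acc x : ι → Bool),
      (bigT f l acc).eval x = f (fun j => if j ∈ l then x j else acc j) := by
  intro l
  induction l with
  | nil =>
    intro acc x
    have : (fun j => if j ∈ ([] : List ι) then x j else acc j) = acc := by
      funext j; simp
    rw [this, bigT, DecTree.eval]
  | cons i l ih =>
    intro acc x
    have key : ∀ b : Bool, x i = b →
        f (fun j => if j ∈ l then x j else Function.update acc i b j) =
        f (fun j => if j ∈ i :: l then x j else acc j) := by
      intro b hb
      congr 1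
      funext j
      by_cases hjl : j ∈ l
      · simp [hjl, List.mem_cons]
      · rcases eq_or_ne j i with rfl | hji
        · simp [hjl, Function.update_self, hb.symm]
        · simp [hjl, hji, Function.update_of_ne hji]
    rw [bigT]
    show (if x i then (bigT f l (Function.update acc i true)).eval x
        else (bigT f l (Function.update acc i false)).eval x) = _
    cases hxi : x i with
    | false => rw [if_neg (by simp [hxi]), ih, key false hxi]
    | true => rw [if_pos (by simp [hxi]), ih, key true hxi]

private lemma bigT_queries {ι : Type} [DecidableEq ι] (f : (ι → Bool) → Bool) :
    ∀ (l : List ι) (acc x : ι → Bool), (bigT f l acc).queries x = l.length := by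
  intro l
  induction l with
  | nil => intro acc x; rfl
  | cons i l ih =>
    intro acc x
    rw [bigT]
    show 1 + (if x i then _ else _) = _
    cases hxi : x i with
    | false => rw [if_neg (by simp [hxi]), ih]; simp [List.length_cons]; omega
    | true => rw [if_pos (by simp [hxi]), ih]; simp [List.length_cons]; omega

/-- For `n ≥ 2`, the instance complexity of Connectivity equals
`C(n,2) / (n - 1)`. -/
theorem conn_instC (n : ℕ) (hn : 2 ≤ n) :
    (∃ T : DecTree (Edge n), Computes T (CONNb n) ∧
        ∀ x : Edge n → Bool, T.queries x * (n - 1) ≤ n.choose 2 * certC (CONNb n) x) ∧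
    (∀ T : DecTree (Edge n), Computes T (CONNb n) →
        ∃ x : Edge n → Bool, T.queries x * (n - 1) ≥ n.choose 2 * certC (CONNb n) x) := by
  classical
  constructor
  · -- Part (i): the full decision tree
    refine ⟨bigT (CONNb n) (Finset.univ.toList) (fun _ => false), ?_, ?_⟩
    · intro x
      rw [bigT_eval]
      congr 1
      funext j
      simp [Finset.mem_toList]
    · intro x
      have hq : (bigT (CONNb n) (Finset.univ.toList) (fun _ => false)).queries x
          = n.choose 2 := by
        rw [bigT_queries, Finset.length_toList, Finset.card_univ, card_edge']
      rw [hq]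
      exact Nat.mul_le_mul_left _ (certC_lb n hn x)
  · -- Part (ii): the adversary lower bound
    intro T hT
    have h01 : (⟨0, by omega⟩ : Fin n) ≠ ⟨1, by omega⟩ := by simp [Fin.ext_iff]
    have hb : (graphOf (fun _ : Edge n => true)).Connected := by
      rw [connected_iff]
      refine ⟨?_, ⟨⟨0, by omega⟩⟩⟩
      intro a b
      rcases eq_or_ne a b with rfl | hab
      · exact SimpleGraph.Reachable.refl a
      · exact ((adj_iff' _ hab).mpr rfl).reachable
    obtain ⟨x', _, hconn', hbr, hcount⟩ :=
      main_ind T (fun _ => true) ∅ (by simp) hb (by simp) (fun y _ => hT y)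
    refine ⟨x', ?_⟩
    have htree : (graphOf x').IsTree := by
      refine ⟨hconn', ?_⟩
      rw [isAcyclic_iff_forall_edge_isBridge]
      intro e he
      have hnd : ¬ e.IsDiag := (graphOf x').not_isDiag_of_mem_edgeSet he
      obtain ⟨a, b, hab, hval⟩ := edge_exists_rep (⟨e, hnd⟩ : Edge n)
      have hxg : x' ⟨e, hnd⟩ = true := (mem_edgeSet_iff' x' ⟨e, hnd⟩).mp he
      have heval : e = s(a, b) := hval
      rw [heval, isBridge_iff]
      · intro hre
        have hdel := connected_delete' hconn' hre
        rw [show ({s(a, b)} : Set (Sym2 (Fin n))) = {(⟨e, hnd⟩ : Edge n).1} by rw [hval]] at hdel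
        exact hbr ⟨e, hnd⟩ hxg ((congrArg SimpleGraph.Connected (graphOf_update_false' x' ⟨e, hnd⟩)).mpr hdel)
    set S : Finset (Edge n) := Finset.univ.filter (fun e => x' e = true) with hS
    have hcert : IsCert (CONNb n) x' S := by
      intro y hy
      have hle : graphOf x' ≤ graphOf y := by
        apply graphOf_mono'
        intro e hxe
        rw [hy e (by simp [hS, hxe])]
        exact hxe
      rw [connb_true.mpr (hconn'.mono hle), connb_true.mpr hconn']
    have hcards := htree.card_edgeFinset
    rw [Fintype.card_fin, card_edgeFinset_eq' x', ← hS] at hcards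
    have hcle : certC (CONNb n) x' ≤ n - 1 := by
      have hmem : (n - 1 : ℕ) ∈
          {k | ∃ S' : Finset (Edge n), S'.card = k ∧ IsCert (CONNb n) x' S'} :=
        ⟨S, by omega, hcert⟩
      exact Nat.sInf_le hmem
    have hQ : n.choose 2 ≤ T.queries x' := by
      rw [← card_edge' n]
      simpa using hcount
    calc n.choose 2 * certC (CONNb n) x' ≤ n.choose 2 * (n - 1) :=
          Nat.mul_le_mul_left _ hcle
      _ ≤ T.queries x' * (n - 1) := Nat.mul_le_mul_right _ hQ
end EdgeAux
end

section
/- For every positive integer n and every x ∈ {0,1}^n, the certificate complexity of the Greater-Than function on the input (x, x) equals n: C(GT_n, (x,x)) = n. -/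
/-- The Greater-Than function `GT_n` on `2n` variables: `GTb n z = true` iff the
binary number `Σ_{i=1}^n 2^i x_i` exceeds `Σ_{i=1}^n 2^i y_i`, where
`x = z ∘ Sum.inl` and `y = z ∘ Sum.inr` (coordinate `i : Fin n` has index `i+1`). -/
def GTb (n : ℕ) (z : Fin n ⊕ Fin n → Bool) : Bool :=
  decide ((∑ i : Fin n, 2 ^ ((i : ℕ) + 1) * (if z (Sum.inl i) then 1 else 0)) >
    ∑ i : Fin n, 2 ^ ((i : ℕ) + 1) * (if z (Sum.inr i) then (1 : ℕ) else 0))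


/-- For every positive `n` and every `x`, the certificate complexity of `GT_n`
on the input `(x, x)` equals `n`. -/
theorem GT_cert_equal_inputs (n : ℕ) (hn : 1 ≤ n) (x : Fin n → Bool) :
    certC (GTb n) (Sum.elim x x) = n := by
  have hfx : GTb n (Sum.elim x x) = false := by
    simp [GTb]
    exact le_rfl
  -- membership: a certificate of size n
  have hmem : n ∈ {k | ∃ S : Finset (Fin n ⊕ Fin n), S.card = k ∧ IsCert (GTb n) (Sum.elim x x) S} := by
    refine ⟨Finset.image (fun i => if x i then Sum.inr i else Sum.inl i) Finset.univ, ?_, ?_⟩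
    · rw [Finset.card_image_of_injective _ ?_, Finset.card_univ, Fintype.card_fin]
      intro a b hab
      by_cases ha : x a <;> by_cases hb : x b <;> simp [ha, hb] at hab <;> exact hab
    · intro y hy
      rw [hfx]
      simp only [GTb, decide_eq_false_iff_not, not_lt]
      apply Finset.sum_le_sum
      intro j _
      by_cases hxj : x j
      · have h1 : y (Sum.inr j) = true := by
          rw [hy (Sum.inr j) (Finset.mem_image.mpr ⟨j, Finset.mem_univ j, by simp [hxj]⟩)]
          simpa using hxj
        rw [h1]
        split <;> simp
      · have h1 : y (Sum.inl j) = false := by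
          rw [hy (Sum.inl j) (Finset.mem_image.mpr ⟨j, Finset.mem_univ j, by simp [hxj]⟩)]
          simpa using hxj
        simp [h1]
  apply le_antisymm
  · exact Nat.sInf_le hmem
  · apply le_csInf ⟨n, hmem⟩
    intro k hk
    obtain ⟨S, hScard, hScert⟩ := hk
    by_contra hlt
    push_neg at hlt
    have hT : (S.image (Sum.elim id id)).card < n :=
      lt_of_le_of_lt (le_trans Finset.card_image_le hScard.le) hlt
    obtain ⟨i, hi⟩ : ∃ i : Fin n, i ∉ S.image (Sum.elim id id) := by
      by_contra h
      push_neg at h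
      have huniv := Finset.eq_univ_iff_forall.mpr h
      rw [huniv, Finset.card_univ, Fintype.card_fin] at hT
      exact lt_irrefl _ hT
    have hli : Sum.inl i ∉ S := fun h => hi (Finset.mem_image.mpr ⟨_, h, rfl⟩)
    have hri : Sum.inr i ∉ S := fun h => hi (Finset.mem_image.mpr ⟨_, h, rfl⟩)
    set y : Fin n ⊕ Fin n → Bool :=
      Sum.elim (fun j => if j = i then true else x j)
        (fun j => if j = i then false else x j) with hy
    have hagree : ∀ s ∈ S, y s = Sum.elim x x s := by
      intro s hs
      cases s with
      | inl j =>
        have hne : j ≠ i := fun h => hli (h ▸ hs)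
        simp [hy, hne]
      | inr j =>
        have hne : j ≠ i := fun h => hri (h ▸ hs)
        simp [hy, hne]
    have hcontra := hScert y hagree
    rw [hfx] at hcontra
    have htrue : GTb n y = true := by
      simp only [GTb, decide_eq_true_eq]
      have key : ∀ (b : Fin n → Bool),
          ∑ j : Fin n, 2 ^ ((j : ℕ) + 1) * (if b j then (1 : ℕ) else 0) =
          (∑ j ∈ Finset.univ.erase i, 2 ^ ((j : ℕ) + 1) * (if b j then (1 : ℕ) else 0)) +
            2 ^ ((i : ℕ) + 1) * (if b i then (1 : ℕ) else 0) :=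
        fun b => (Finset.sum_erase_add _ _ (Finset.mem_univ i)).symm
      rw [key (fun j => y (Sum.inl j)), key (fun j => y (Sum.inr j))]
      have heq : ∑ j ∈ Finset.univ.erase i, 2 ^ ((j : ℕ) + 1) * (if y (Sum.inl j) then (1 : ℕ) else 0)
          = ∑ j ∈ Finset.univ.erase i, 2 ^ ((j : ℕ) + 1) * (if y (Sum.inr j) then (1 : ℕ) else 0) := by
        apply Finset.sum_congr rfl
        intro j hj
        have hne : j ≠ i := Finset.ne_of_mem_erase hj
        simp [hy, hne]
      rw [heq]
      simp [hy]
    rw [htrue] at hcontra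
    exact absurd hcontra (by simp)
end

section
/- For every positive integer n, the instance complexity of the Greater-Than function is at most 2: there exists a decision tree T computing GT_n such that for every input z ∈ {0,1}^{2n}, the number of queries T makes on z is at most 2·C(GT_n, z). -/
namespace GTaux


lemma sum_pow_range (m : ℕ) : ∑ k ∈ Finset.range m, 2^(k+1) = 2^(m+1) - 2 := by
  induction m with
  | zero => simp
  | succ m ih =>
    rw [Finset.sum_range_succ, ih]
    have h1 : 1 ≤ 2^(m+1) := Nat.one_le_two_pow
    have h2 : 2^(m+2) = 2 * 2^(m+1) := by ring
    omega

lemma sum_col_lt {n : ℕ} {s : Finset (Fin n)} {i : Fin n} (h : ∀ j ∈ s, (j:ℕ) < (i:ℕ)) :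
    ∑ j ∈ s, 2^((j:ℕ)+1) ≤ 2^((i:ℕ)+1) - 2 := by
  calc ∑ j ∈ s, 2^((j:ℕ)+1) = ∑ k ∈ s.image Fin.val, 2^(k+1) :=
        by rw [Finset.sum_image (fun a _ b _ hab => Fin.val_injective hab)]
    _ ≤ ∑ k ∈ Finset.range (i:ℕ), 2^(k+1) := Finset.sum_le_sum_of_subset (by
        intro k hk
        simp only [Finset.mem_image] at hk
        obtain ⟨j, hj, rfl⟩ := hk
        exact Finset.mem_range.mpr (h j hj))
    _ = 2^((i:ℕ)+1) - 2 := sum_pow_range _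

lemma val_gt {n : ℕ} {b c : Fin n → Bool} {i : Fin n}
    (hhi : ∀ j, i < j → b j = c j) (hb : b i = true) (hc : c i = false) :
    (∑ j : Fin n, 2^((j:ℕ)+1) * (if c j then (1:ℕ) else 0)) <
    ∑ j : Fin n, 2^((j:ℕ)+1) * (if b j then 1 else 0) := by
  classical
  set f : (Fin n → Bool) → Fin n → ℕ := fun d j => 2^((j:ℕ)+1) * (if d j then 1 else 0) with hf
  have hsplit : ∀ d : Fin n → Bool, ∑ j : Fin n, f d j =
      (∑ j ∈ Finset.univ.filter (fun j => i < j), f d j) +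
      ∑ j ∈ Finset.univ.filter (fun j => ¬ i < j), f d j :=
    fun d => (Finset.sum_filter_add_sum_filter_not _ _ _).symm
  rw [show (∑ j : Fin n, 2^((j:ℕ)+1) * (if c j then (1:ℕ) else 0)) = ∑ j : Fin n, f c j from rfl,
    show (∑ j : Fin n, 2^((j:ℕ)+1) * (if b j then (1:ℕ) else 0)) = ∑ j : Fin n, f b j from rfl,
    hsplit, hsplit]
  have hhigh : (∑ j ∈ Finset.univ.filter (fun j => i < j), f c j) =
      ∑ j ∈ Finset.univ.filter (fun j => i < j), f b j := by
    refine Finset.sum_congr rfl fun j hj => ?_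
    simp only [Finset.mem_filter] at hj
    simp [hf, hhi j hj.2]
  rw [hhigh]
  have hi_mem : i ∈ Finset.univ.filter (fun j : Fin n => ¬ i < j) := by simp
  have hlowb : 2^((i:ℕ)+1) ≤ ∑ j ∈ Finset.univ.filter (fun j => ¬ i < j), f b j := by
    have := Finset.single_le_sum (f := f b) (fun j _ => Nat.zero_le _) hi_mem
    simpa [hf, hb] using this
  have hlowc : (∑ j ∈ Finset.univ.filter (fun j => ¬ i < j), f c j) ≤ 2^((i:ℕ)+1) - 2 := by
    rw [← Finset.add_sum_erase _ _ hi_mem]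
    have hterm : f c i = 0 := by simp [hf, hc]
    rw [hterm, zero_add]
    calc (∑ j ∈ (Finset.univ.filter (fun j : Fin n => ¬ i < j)).erase i, f c j)
        ≤ ∑ j ∈ (Finset.univ.filter (fun j : Fin n => ¬ i < j)).erase i, 2^((j:ℕ)+1) := by
          refine Finset.sum_le_sum fun j _ => ?_
          simp only [hf]
          cases c j <;> simp
      _ ≤ 2^((i:ℕ)+1) - 2 := sum_col_lt (by
          intro j hj
          simp only [Finset.mem_erase, Finset.mem_filter] at hj
          have : j < i := lt_of_le_of_ne (not_lt.mp hj.2.2) hj.1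
          exact this)
  have h2 : 2 ≤ 2^((i:ℕ)+1) := by
    have : 2^1 ≤ 2^((i:ℕ)+1) := Nat.pow_le_pow_right (by norm_num) (by omega)
    simpa using this
  omega

variable {n : ℕ}

/-- The tree comparing columns in the order given by `l`. -/
def cmpTree : List (Fin n) → DecTree (Fin n ⊕ Fin n)
  | [] => .leaf false
  | i :: rest => .node (Sum.inl i)
      (.node (Sum.inr i) (cmpTree rest) (.leaf false))
      (.node (Sum.inr i) (.leaf true) (cmpTree rest))

lemma GTb_flip_true {z : Fin n ⊕ Fin n → Bool} {i : Fin n}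
    (hhi : ∀ j, i < j → z (Sum.inl j) = z (Sum.inr j))
    (hx : z (Sum.inl i) = true) (hy : z (Sum.inr i) = false) : GTb n z = true :=
  decide_eq_true (val_gt (b := fun j => z (Sum.inl j)) (c := fun j => z (Sum.inr j)) hhi hx hy)

lemma GTb_flip_false {z : Fin n ⊕ Fin n → Bool} {i : Fin n}
    (hhi : ∀ j, i < j → z (Sum.inl j) = z (Sum.inr j))
    (hx : z (Sum.inl i) = false) (hy : z (Sum.inr i) = true) : GTb n z = false :=
  decide_eq_false (Nat.lt_asymm
    (val_gt (b := fun j => z (Sum.inr j)) (c := fun j => z (Sum.inl j))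
      (fun j hj => (hhi j hj).symm) hy hx))

/-- Invariant: every column not in `l` is above all of `l` and is equal in `z`. -/
def Inv (z : Fin n ⊕ Fin n → Bool) (l : List (Fin n)) : Prop :=
  ∀ j : Fin n, j ∉ l → z (Sum.inl j) = z (Sum.inr j) ∧ ∀ i ∈ l, i < j

lemma inv_high {z : Fin n ⊕ Fin n → Bool} {i : Fin n} {rest : List (Fin n)}
    (hs : (i :: rest).Pairwise (· > ·)) (hinv : Inv z (i :: rest)) :
    ∀ j, i < j → z (Sum.inl j) = z (Sum.inr j) := by
  intro j hj
  refine (hinv j ?_).1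
  intro hmem
  rcases List.mem_cons.mp hmem with rfl | hm
  · exact absurd hj (lt_irrefl _)
  · exact absurd (lt_trans ((List.pairwise_cons.mp hs).1 j hm) hj) (lt_irrefl _)

lemma inv_tail {z : Fin n ⊕ Fin n → Bool} {i : Fin n} {rest : List (Fin n)}
    (hs : (i :: rest).Pairwise (· > ·)) (hinv : Inv z (i :: rest))
    (heq : z (Sum.inl i) = z (Sum.inr i)) : Inv z rest := by
  intro j hj
  by_cases hji : j = i
  · subst hji
    exact ⟨heq, fun i' hi' => (List.pairwise_cons.mp hs).1 i' hi'⟩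
  · have hjl : j ∉ i :: rest := by
      intro hmem
      rcases List.mem_cons.mp hmem with rfl | hm
      · exact hji rfl
      · exact hj hm
    obtain ⟨h1, h2⟩ := hinv j hjl
    exact ⟨h1, fun i' hi' => h2 i' (List.mem_cons_of_mem _ hi')⟩

lemma eval_cmpTree (l : List (Fin n)) (hs : l.Pairwise (· > ·)) (z : Fin n ⊕ Fin n → Bool)
    (hinv : Inv z l) : (cmpTree l).eval z = GTb n z := by
  induction l with
  | nil =>
    have hall : (∑ j : Fin n, 2 ^ ((j : ℕ) + 1) * (if z (Sum.inl j) then 1 else 0)) =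
        ∑ j : Fin n, 2 ^ ((j : ℕ) + 1) * (if z (Sum.inr j) then (1:ℕ) else 0) :=
      Finset.sum_congr rfl fun j _ => by rw [(hinv j (by simp)).1]
    simp only [cmpTree, DecTree.eval, GTb, hall]
    simp
  | cons i rest ih =>
    have hhi := inv_high hs hinv
    cases hx : z (Sum.inl i) <;> cases hy : z (Sum.inr i)
    · have := ih (List.pairwise_cons.mp hs).2 (inv_tail hs hinv (hx.trans hy.symm))
      simpa [cmpTree, DecTree.eval, hx, hy] using this
    · have := GTb_flip_false hhi hx hy
      simp [cmpTree, DecTree.eval, hx, hy, this]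
    · have := GTb_flip_true hhi hx hy
      simp [cmpTree, DecTree.eval, hx, hy, this]
    · have := ih (List.pairwise_cons.mp hs).2 (inv_tail hs hinv (hx.trans hy.symm))
      simpa [cmpTree, DecTree.eval, hx, hy] using this

/-- The column of a coordinate. -/
def colOf : Fin n ⊕ Fin n → Fin n := Sum.elim id id

lemma cert_hits {z : Fin n ⊕ Fin n → Bool} {i : Fin n}
    (hhi : ∀ j, i < j → z (Sum.inl j) = z (Sum.inr j))
    {S : Finset (Fin n ⊕ Fin n)} (hc : IsCert (GTb n) z S) :
    Sum.inl i ∈ S ∨ Sum.inr i ∈ S := by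
  by_contra h
  push_neg at h
  obtain ⟨hl, hr⟩ := h
  classical
  set z1 : Fin n ⊕ Fin n → Bool :=
    Function.update (Function.update z (Sum.inl i) true) (Sum.inr i) false with hz1
  set z2 : Fin n ⊕ Fin n → Bool :=
    Function.update (Function.update z (Sum.inl i) false) (Sum.inr i) true with hz2
  have hagree1 : ∀ s ∈ S, z1 s = z s := by
    intro s hsS
    have h1 : s ≠ Sum.inl i := fun h => hl (h ▸ hsS)
    have h2 : s ≠ Sum.inr i := fun h => hr (h ▸ hsS)
    simp [hz1, Function.update_of_ne h2, Function.update_of_ne h1]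
  have hagree2 : ∀ s ∈ S, z2 s = z s := by
    intro s hsS
    have h1 : s ≠ Sum.inl i := fun h => hl (h ▸ hsS)
    have h2 : s ≠ Sum.inr i := fun h => hr (h ▸ hsS)
    simp [hz2, Function.update_of_ne h2, Function.update_of_ne h1]
  have hv1 : GTb n z1 = true := by
    refine GTb_flip_true (i := i) ?_ ?_ ?_
    · intro j hj
      have hne : j ≠ i := fun h => (lt_irrefl i (h ▸ hj))
      rw [hz1]
      rw [Function.update_of_ne (fun h : Sum.inl j = Sum.inr i => nomatch h),
        Function.update_of_ne (fun h : Sum.inl j = Sum.inl i => hne (Sum.inl.inj h)),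
        Function.update_of_ne (fun h : Sum.inr j = Sum.inr i => hne (Sum.inr.inj h)),
        Function.update_of_ne (fun h : Sum.inr j = Sum.inl i => nomatch h)]
      exact hhi j hj
    · rw [hz1, Function.update_of_ne (fun h : Sum.inl i = Sum.inr i => nomatch h)]
      simp
    · simp [hz1]
  have hv2 : GTb n z2 = false := by
    refine GTb_flip_false (i := i) ?_ ?_ ?_
    · intro j hj
      have hne : j ≠ i := fun h => (lt_irrefl i (h ▸ hj))
      rw [hz2]
      rw [Function.update_of_ne (fun h : Sum.inl j = Sum.inr i => nomatch h),
        Function.update_of_ne (fun h : Sum.inl j = Sum.inl i => hne (Sum.inl.inj h)),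
        Function.update_of_ne (fun h : Sum.inr j = Sum.inr i => hne (Sum.inr.inj h)),
        Function.update_of_ne (fun h : Sum.inr j = Sum.inl i => nomatch h)]
      exact hhi j hj
    · rw [hz2, Function.update_of_ne (fun h : Sum.inl i = Sum.inr i => nomatch h)]
      simp
    · simp [hz2]
  have e1 := hc z1 hagree1
  have e2 := hc z2 hagree2
  rw [hv1] at e1
  rw [hv2] at e2
  rw [← e1] at e2
  exact Bool.noConfusion e2

lemma queries_cmpTree (l : List (Fin n)) (hs : l.Pairwise (· > ·)) (z : Fin n ⊕ Fin n → Bool)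
    (hinv : Inv z l) (S : Finset (Fin n ⊕ Fin n)) (hc : IsCert (GTb n) z S) :
    (cmpTree l).queries z ≤ 2 * (S.filter (fun s => colOf s ∈ l)).card := by
  classical
  induction l with
  | nil => simp [cmpTree, DecTree.queries]
  | cons i rest ih =>
    have hhi := inv_high hs hinv
    obtain ⟨s0, hs0S, hs0col⟩ : ∃ s0, s0 ∈ S ∧ colOf s0 = i := by
      rcases cert_hits hhi hc with h | h
      · exact ⟨Sum.inl i, h, rfl⟩
      · exact ⟨Sum.inr i, h, rfl⟩
    have hinotrest : i ∉ rest := fun hm =>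
      absurd ((List.pairwise_cons.mp hs).1 i hm) (lt_irrefl _)
    have hs0mem : s0 ∈ S.filter (fun s => colOf s ∈ i :: rest) := by
      simp [Finset.mem_filter, hs0S, hs0col]
    have hcard1 : 1 ≤ (S.filter (fun s => colOf s ∈ i :: rest)).card :=
      Finset.card_pos.mpr ⟨s0, hs0mem⟩
    cases hx : z (Sum.inl i) <;> cases hy : z (Sum.inr i)
    case false.true =>
      have hq : (cmpTree (i :: rest)).queries z = 2 := by
        simp [cmpTree, DecTree.queries, hx, hy]
      omega
    case true.false =>
      have hq : (cmpTree (i :: rest)).queries z = 2 := by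
        simp [cmpTree, DecTree.queries, hx, hy]
      omega
    all_goals {
      have heq : z (Sum.inl i) = z (Sum.inr i) := hx.trans hy.symm
      have hq : (cmpTree (i :: rest)).queries z = 2 + (cmpTree rest).queries z := by
        simp [cmpTree, DecTree.queries, hx, hy]
        omega
      have hrec := ih (List.pairwise_cons.mp hs).2 (inv_tail hs hinv heq)
      have hs0notin : s0 ∉ S.filter (fun s => colOf s ∈ rest) := by
        simp [Finset.mem_filter, hs0col, hinotrest]
      have hsub : insert s0 (S.filter (fun s => colOf s ∈ rest)) ⊆
          S.filter (fun s => colOf s ∈ i :: rest) := by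
        intro s hsm
        rcases Finset.mem_insert.mp hsm with rfl | hsm
        · exact hs0mem
        · simp only [Finset.mem_filter] at hsm ⊢
          exact ⟨hsm.1, List.mem_cons_of_mem _ hsm.2⟩
      have hcard := Finset.card_le_card hsub
      rw [Finset.card_insert_of_notMem hs0notin] at hcard
      omega
    }

end GTaux

/-- For every positive `n`, the instance complexity of `GT_n` is at most `2`. -/
theorem GT_instC_le_two (n : ℕ) (hn : 1 ≤ n) :
    ∃ T : DecTree (Fin n ⊕ Fin n), Computes T (GTb n) ∧
      ∀ z : Fin n ⊕ Fin n → Bool, T.queries z ≤ 2 * certC (GTb n) z := by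
  classical
  refine ⟨GTaux.cmpTree ((List.finRange n).reverse), ?_, ?_⟩
  · intro z
    refine GTaux.eval_cmpTree _ ?_ z ?_
    · rw [List.pairwise_reverse]
      exact List.pairwise_lt_finRange n
    · intro j hj
      exact absurd (List.mem_reverse.mpr (List.mem_finRange j)) hj
  · intro z
    have hne : {k | ∃ S : Finset (Fin n ⊕ Fin n), S.card = k ∧ IsCert (GTb n) z S}.Nonempty := by
      refine ⟨Finset.univ.card, Finset.univ, rfl, ?_⟩
      intro y hy
      have : y = z := funext fun i => hy i (Finset.mem_univ i)
      rw [this]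
    obtain ⟨S, hScard, hScert⟩ := Nat.sInf_mem hne
    calc (GTaux.cmpTree ((List.finRange n).reverse)).queries z
        ≤ 2 * (S.filter (fun s => GTaux.colOf s ∈ (List.finRange n).reverse)).card := by
          refine GTaux.queries_cmpTree _ ?_ z ?_ S hScert
          · rw [List.pairwise_reverse]
            exact List.pairwise_lt_finRange n
          · intro j hj
            exact absurd (List.mem_reverse.mpr (List.mem_finRange j)) hj
      _ ≤ 2 * S.card := by
          have := Finset.card_le_card (Finset.filter_subset
            (fun s => GTaux.colOf s ∈ (List.finRange n).reverse) S)
          omega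
      _ = 2 * certC (GTb n) z := by rw [hScard]; rfl
end

section
/- For every odd positive integer n, the instance complexity of the Odd-Max-Bit function is strictly less than 2: there exists a decision tree T computing OMB_n such that for every input x ∈ {0,1}^n, the number of queries T makes on x is strictly less than 2·C(OMB_n, x). -/
/-- The Odd-Max-Bit function on `n` variables indexed `1,…,n` (coordinate
`i : Fin n` has index `i+1`): outputs `true` iff the maximum index of a variable
set to `1` exists and is odd (in particular `OMBb n 0^n = false`). -/
def OMBb (n : ℕ) (x : Fin n → Bool) : Bool :=
  decide (∃ i : Fin n, x i = true ∧ Odd ((i : ℕ) + 1) ∧ ∀ j : Fin n, i < j → x j = false)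

/-!
Scan the variables from `x_n` downwards and stop at the first `1`. If the top `1` sits at
position `p`, the scan makes `n - p + 1` queries, while a certificate must contain the
`⌊(n - p + 1)/2⌋` positions above `p` of the opposite parity (setting any one of them flips
the output) and at least one position `≤ p` (otherwise resetting the bits at positions `≤ p`
could change the output). On `0^n` the scan makes `n` queries and a certificate must contain all
`⌈n/2⌉` odd positions, which is more than `n/2` exactly because `n` is odd.
-/

open Finset Function

namespace IsCert

variable {ι : Type} {f : (ι → Bool) → Bool} {x : ι → Bool} {S : Finset ι}

lemma exists_mem_ne (hS : IsCert f x S) {y : ι → Bool} (hy : f y ≠ f x) :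
    ∃ i ∈ S, y i ≠ x i := by
  by_contra! h
  exact hy (hS y h)

lemma mem_of_update_ne [DecidableEq ι] (hS : IsCert f x S) {i : ι} {b : Bool}
    (h : f (update x i b) ≠ f x) : i ∈ S := by
  obtain ⟨j, hjS, hj⟩ := hS.exists_mem_ne h
  rcases eq_or_ne j i with rfl | hji
  · exact hjS
  · exact absurd (update_of_ne hji b x) hj

end IsCert

lemma exists_isCert_card_eq_certC {ι : Type} [Fintype ι] (f : (ι → Bool) → Bool)
    (x : ι → Bool) : ∃ S, IsCert f x S ∧ S.card = certC f x := by
  have huniv : IsCert f x univ := fun y hy => congrArg f (funext fun i => hy i (mem_univ i))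
  obtain ⟨S, hcard, hS⟩ := Nat.sInf_mem (⟨_, univ, rfl, huniv⟩ :
    {k | ∃ S : Finset ι, S.card = k ∧ IsCert f x S}.Nonempty)
  exact ⟨S, hS, hcard⟩

lemma le_card_of_forall_even_sub_mem {n a : ℕ} {S : Finset (Fin n)}
    (h : ∀ j : Fin n, a ≤ j → Even ((j : ℕ) - a) → j ∈ S) : (n - a + 1) / 2 ≤ S.card := by
  rw [← card_map Fin.valEmbedding]
  refine le_card_of_inj_on_range (a + 2 * ·) (fun k hk => ?_) (fun k _ l _ hkl => by omega)
  have hlt : a + 2 * k < n := by omega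
  exact mem_map.2 ⟨⟨a + 2 * k, hlt⟩, h _ (by simp) (by simp), rfl⟩

section OddMaxBit

variable {n : ℕ} {x : Fin n → Bool}

lemma OMBb_of_forall_false (hx : ∀ i, x i = false) : OMBb n x = false := by
  simp [OMBb, hx]

lemma OMBb_of_isMax {i : Fin n} (hi : x i = true) (hm : ∀ j, i < j → x j = false) :
    OMBb n x = decide (Odd ((i : ℕ) + 1)) := by
  refine decide_eq_decide.2 ⟨fun ⟨j, hj, hodd, hjm⟩ => ?_, fun hodd => ⟨i, hi, hodd, hm⟩⟩
  rcases lt_trichotomy i j with hij | rfl | hji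
  · simp [hm j hij] at hj
  · exact hodd
  · simp [hjm i hji] at hi

lemma OMBb_update_true_of_forall_gt {i : Fin n} (hm : ∀ j, i < j → x j = false) :
    OMBb n (update x i true) = decide (Odd ((i : ℕ) + 1)) :=
  OMBb_of_isMax (update_self i true x) fun j hij => by
    rw [update_of_ne (ne_of_gt hij)]
    exact hm j hij

lemma forall_eq_false_or_exists_isMax (x : Fin n → Bool) :
    (∀ i, x i = false) ∨ ∃ i, x i = true ∧ ∀ j, i < j → x j = false := by
  by_cases h : ∃ i, x i = true
  · obtain ⟨i, hi, hmax⟩ := exists_max_image (univ.filter (x · = true)) id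
      (by simpa [Finset.Nonempty] using h)
    refine Or.inr ⟨i, (mem_filter.1 hi).2, fun j hij => ?_⟩
    by_contra hj
    exact absurd (hmax j (by simpa using hj)) (not_le.2 hij)
  · simp only [not_exists, Bool.not_eq_true] at h
    exact Or.inl h

lemma exists_OMBb_ne_of_isMax {i : Fin n} (hi : x i = true) (hm : ∀ j, i < j → x j = false) :
    ∃ y : Fin n → Bool, (∀ j, i < j → y j = false) ∧ OMBb n y ≠ OMBb n x := by
  rw [OMBb_of_isMax hi hm]
  by_cases hodd : Odd ((i : ℕ) + 1)
  · exact ⟨fun _ => false, fun _ _ => rfl, by simp [OMBb_of_forall_false, hodd]⟩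
  · have hi0 : 0 < (i : ℕ) := Nat.pos_of_ne_zero fun h => hodd (by simp [h])
    let z : Fin n := ⟨0, by omega⟩
    refine ⟨update (fun _ => false) z true, fun j hij => update_of_ne ?_ _ _, ?_⟩
    · exact ne_of_gt (lt_trans (Fin.lt_def.2 hi0) hij)
    · rw [OMBb_update_true_of_forall_gt fun _ _ => rfl]
      simp [z, hodd]

lemma le_card_of_isCert_of_forall_false {S : Finset (Fin n)} (hx : ∀ i, x i = false)
    (hS : IsCert (OMBb n) x S) : (n + 1) / 2 ≤ S.card :=
  le_card_of_forall_even_sub_mem fun j _ hj => hS.mem_of_update_ne (b := true) <| by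
    rw [OMBb_update_true_of_forall_gt fun k _ => hx k, OMBb_of_forall_false hx]
    simpa using (Nat.sub_zero (j : ℕ) ▸ hj).add_one

lemma le_card_of_isCert_of_isMax {S : Finset (Fin n)} {i : Fin n} (hi : x i = true)
    (hm : ∀ j, i < j → x j = false) (hS : IsCert (OMBb n) x S) :
    (n - i) / 2 + 1 ≤ S.card := by
  obtain ⟨y, hy, hyx⟩ := exists_OMBb_ne_of_isMax hi hm
  obtain ⟨s, hsS, hs⟩ := hS.exists_mem_ne hyx
  have hsi : s ≤ i := not_lt.1 fun hlt => hs (by rw [hy s hlt, hm s hlt])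
  have hflip : ∀ j : Fin n, (i : ℕ) + 1 ≤ j → Even ((j : ℕ) - (i + 1)) → j ∈ S.erase s := by
    intro j hij hj
    have hij' : i < j := Fin.lt_def.2 hij
    refine mem_erase.2 ⟨(lt_of_le_of_lt hsi hij').ne', hS.mem_of_update_ne (b := true) ?_⟩
    rw [OMBb_update_true_of_forall_gt fun k hk => hm k (lt_trans hij' hk), OMBb_of_isMax hi hm]
    obtain ⟨r, hr⟩ := hj
    simp only [ne_eq, decide_eq_decide, Nat.odd_iff]
    omega
  have hcard := le_card_of_forall_even_sub_mem hflip
  rw [card_erase_of_mem hsS] at hcard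
  have hpos := card_pos.2 ⟨s, hsS⟩
  omega

def ombScan (n : ℕ) : (k : ℕ) → k ≤ n → DecTree (Fin n)
  | 0, _ => .leaf false
  | k + 1, hk => .node ⟨k, hk⟩ (ombScan n k (Nat.le_of_succ_le hk)) (.leaf (decide (Odd (k + 1))))

lemma eval_ombScan : ∀ (k : ℕ) (hk : k ≤ n), (∀ j : Fin n, k ≤ j → x j = false) →
    (ombScan n k hk).eval x = OMBb n x
  | 0, _, hx => by
    rw [OMBb_of_forall_false fun j => hx j (Nat.zero_le _)]
    rfl
  | k + 1, hk, hx => by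
    simp only [ombScan, DecTree.eval]
    split_ifs with hxk
    · rw [OMBb_of_isMax hxk fun j hj => hx j hj]
    · refine eval_ombScan k _ fun j hj => ?_
      rcases hj.eq_or_lt with hkj | hkj
      · rw [← Bool.not_eq_true]
        rwa [show j = ⟨k, hk⟩ from Fin.ext hkj.symm]
      · exact hx j hkj

lemma queries_ombScan_le (x : Fin n → Bool) :
    ∀ (k : ℕ) (hk : k ≤ n), (ombScan n k hk).queries x ≤ k
  | 0, _ => le_rfl
  | k + 1, hk => by
    have ih := queries_ombScan_le x k (Nat.le_of_succ_le hk)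
    simp only [ombScan, DecTree.queries]
    split_ifs <;> omega

lemma queries_ombScan_le_sub {i : Fin n} (hi : x i = true) :
    ∀ (k : ℕ) (hk : k ≤ n), (i : ℕ) < k → (ombScan n k hk).queries x ≤ k - i
  | 0, _, h => absurd h (Nat.not_lt_zero _)
  | k + 1, hk, h => by
    simp only [ombScan, DecTree.queries]
    split_ifs with hxk
    · omega
    · have hik : (i : ℕ) < k := lt_of_le_of_ne (Nat.lt_succ_iff.1 h) fun hik =>
        hxk (by rwa [show (⟨k, hk⟩ : Fin n) = i from Fin.ext hik.symm])
      have ih := queries_ombScan_le_sub hi k (Nat.le_of_succ_le hk) hik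
      omega

end OddMaxBit

theorem OMB_instC_lt_two_general (n : ℕ) (hodd : Odd n) :
    ∃ T : DecTree (Fin n), Computes T (OMBb n) ∧
      ∀ x : Fin n → Bool, T.queries x < 2 * certC (OMBb n) x := by
  refine ⟨ombScan n n le_rfl, fun x => eval_ombScan n le_rfl fun j hj => absurd j.isLt hj.not_gt,
    fun x => ?_⟩
  obtain ⟨S, hS, hcard⟩ := exists_isCert_card_eq_certC (OMBb n) x
  rcases forall_eq_false_or_exists_isMax x with hx | ⟨i, hi, hm⟩
  · have hq := queries_ombScan_le x n le_rfl
    have hC := le_card_of_isCert_of_forall_false hx hS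
    rw [Nat.odd_iff] at hodd
    omega
  · have hq := queries_ombScan_le_sub hi n le_rfl i.isLt
    have hC := le_card_of_isCert_of_isMax hi hm hS
    omega

/-- For every odd positive `n`, the instance complexity of `OMB_n` is strictly
less than `2`. -/
theorem OMB_instC_lt_two (n : ℕ) (hn : 1 ≤ n) (hodd : Odd n) :
    ∃ T : DecTree (Fin n), Computes T (OMBb n) ∧
      ∀ x : Fin n → Bool, T.queries x < 2 * certC (OMBb n) x :=
  OMB_instC_lt_two_general n hodd
end
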